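/- arXiv:2001.02608 — 4 statements merged into one kernel-verified Lean document; each statement's English description precedes it below -/
import Mathlib

section
/- Let F, G, H be finite groups and let I ≤ F × G, J ≤ G × H be subgroups with p₂(I) = p₁(J). Let K ≤ F × H be a subgroup with K ≤ I * J, p₁(K) = p₁(I * J) and p₂(K) = p₂(I * J). Let R_K^{I,J} be the finite poset of pairs (U, V) with U ≤ I, V ≤ J, K ≤ U * V and p₂(U) = p₁(V), ordered componentwise by inclusion. Then τ_K^{I,J} = Σ_{(U,V) ∈ R_K^{I,J}} möb_{R_K^{I,J}}((U, V), (I, J)) · σ(U, V), where möb_{R_K^{I,J}} denotes the Möbius function of the poset R_K^{I,J}. -/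
/-! The pairs `(U, V)` with `p₂(U) = p₁(V)` are the fixed points of the interior operator
`(U, V) ↦ (U ∩ (F × p₁(V)), V ∩ (p₂(U) × H))`, which preserves both `U * V` and
`k₂(U) ∩ k₁(V)`, hence `σ`. Grouping the terms of `τ` by the value of this operator, the fibre
sums of `möb(U, I) · möb(V, J)` satisfy the recursion characterising the Möbius function of
`R_K^{I,J}`: for compatible `q`, a pair lies above `q` exactly when its interior does, and the
product of two Möbius functions summed over the interval from `q` to `(I, J)` is `δ(q, (I, J))`. -/

open scoped Classical

namespace SubgroupCat

variable {R S T : Type*}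

/-- The star product of subgroups `U ≤ R × S` and `V ≤ S × T`:
`U * V = {(r, t) | ∃ s, (r, s) ∈ U ∧ (s, t) ∈ V}`. -/
def starProd [Group R] [Group S] [Group T] (U : Subgroup (R × S)) (V : Subgroup (S × T)) :
    Subgroup (R × T) where
  carrier := {rt | ∃ s : S, (rt.1, s) ∈ U ∧ (s, rt.2) ∈ V}
  one_mem' := ⟨1, one_mem U, one_mem V⟩
  mul_mem' := by
    rintro a b ⟨s, hU, hV⟩ ⟨s', hU', hV'⟩
    exact ⟨s * s', mul_mem hU hU', mul_mem hV hV'⟩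
  inv_mem' := by
    rintro a ⟨s, hU, hV⟩
    exact ⟨s⁻¹, inv_mem hU, inv_mem hV⟩

@[simp] lemma mem_starProd [Group R] [Group S] [Group T] {U : Subgroup (R × S)}
    {V : Subgroup (S × T)} {p : R × T} :
    p ∈ starProd U V ↔ ∃ s : S, (p.1, s) ∈ U ∧ (s, p.2) ∈ V := Iff.rfl

/-- First projection `p₁(U) = {r | ∃ s, (r, s) ∈ U}`. -/
def p1 [Group R] [Group S] (U : Subgroup (R × S)) : Subgroup R :=
  U.map (MonoidHom.fst R S)

/-- Second projection `p₂(U) = {s | ∃ r, (r, s) ∈ U}`. -/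
def p2 [Group R] [Group S] (U : Subgroup (R × S)) : Subgroup S :=
  U.map (MonoidHom.snd R S)

/-- First kernel `k₁(U) = {r | (r, 1) ∈ U}`. -/
def k1 [Group R] [Group S] (U : Subgroup (R × S)) : Subgroup R :=
  U.comap (MonoidHom.inl R S)

/-- Second kernel `k₂(U) = {s | (1, s) ∈ U}`. -/
def k2 [Group R] [Group S] (U : Subgroup (R × S)) : Subgroup S :=
  U.comap (MonoidHom.inr R S)

/-- The Möbius function of a finite poset: `pmoeb u i` is `möb(u, i)`. -/
noncomputable def pmoeb {P : Type*} [PartialOrder P] [Finite P] (u i : P) : ℤ :=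
  if u = i then 1
  else if u < i then
    - ∑ v ∈ ({v : P | u < v ∧ v ≤ i}.toFinite.toFinset).attach, pmoeb v.1 i
  else 0
termination_by Nat.card {w : P // u ≤ w}
decreasing_by
  · have hv := v.2
    rw [Set.Finite.mem_toFinset] at hv
    have hlt : u < (v : P) := hv.1
    have hsub : {w : P | (v : P) ≤ w} ⊂ {w : P | u ≤ w} :=
      ⟨fun w hw => le_trans hlt.le hw,
       fun hcon => absurd (hcon (le_refl u)) (by simpa using not_le_of_gt hlt)⟩
    rw [show {w : P // (v : P) ≤ w} = ↑{w : P | (v : P) ≤ w} from rfl,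
      show {w : P // u ≤ w} = ↑{w : P | u ≤ w} from rfl,
      Nat.card_coe_set_eq, Nat.card_coe_set_eq]
    exact Set.ncard_lt_ncard hsub (Set.toFinite _)

/-- `möb(U, I)` for subgroups of a finite group: the Möbius function of the
subgroup lattice. -/
noncomputable def moeb {G : Type*} [Group G] [Finite G] (U I : Subgroup G) : ℤ :=
  pmoeb U I

/-- `ℓ(A) = ℓ(|A|)` for a finite group `A`, where `ℓ : ℕ⁺ →* 𝕂ˣ`. -/
noncomputable def ellG {𝕂 : Type*} [Field 𝕂] (ℓ : ℕ+ →* 𝕂ˣ) (A : Type*) [Group A] [Finite A] :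
    𝕂 :=
  (ℓ ⟨Nat.card A, Nat.card_pos⟩ : 𝕂ˣ)

/-- The cocycle `σ(U, V) = ℓ(k₂(U) ∩ k₁(V))`. -/
noncomputable def sigmaC {𝕂 : Type*} [Field 𝕂] (ℓ : ℕ+ →* 𝕂ˣ)
    {F G H : Type*} [Group F] [Group G] [Group H] [Finite G]
    (U : Subgroup (F × G)) (V : Subgroup (G × H)) : 𝕂 :=
  ellG ℓ ↑(k2 U ⊓ k1 V)

/-- `τ_K^{I,J} = ∑ möb(U,I) · möb(V,J) · σ(U,V)`, the sum being over all pairs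
of subgroups `(U, V)` with `U ≤ I`, `V ≤ J` and `K ≤ U * V`. -/
noncomputable def tau {𝕂 : Type*} [Field 𝕂] (ℓ : ℕ+ →* 𝕂ˣ)
    {F G H : Type*} [Group F] [Group G] [Group H] [Finite F] [Finite G] [Finite H]
    (I : Subgroup (F × G)) (J : Subgroup (G × H)) (K : Subgroup (F × H)) : 𝕂 :=
  ∑ᶠ q ∈ {q : Subgroup (F × G) × Subgroup (G × H) |
      q.1 ≤ I ∧ q.2 ≤ J ∧ K ≤ starProd q.1 q.2},
    (moeb q.1 I : 𝕂) * (moeb q.2 J : 𝕂) * sigmaC ℓ q.1 q.2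

/-- The poset `R_K^{I,J}` of pairs `(U, V)` with `U ≤ I`, `V ≤ J`, `K ≤ U * V` and
`p₂(U) = p₁(V)`, ordered componentwise by inclusion. -/
def Rposet {F G H : Type*} [Group F] [Group G] [Group H]
    (I : Subgroup (F × G)) (J : Subgroup (G × H)) (K : Subgroup (F × H)) :
    Set (Subgroup (F × G) × Subgroup (G × H)) :=
  {q | q.1 ≤ I ∧ q.2 ≤ J ∧ K ≤ starProd q.1 q.2 ∧ p2 q.1 = p1 q.2}

open Finset

section Moebius

variable {P : Type*} [PartialOrder P] [DecidableEq P] [Finite P] [LocallyFiniteOrder P]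

lemma sum_Icc_pmoeb {u i : P} (h : u ≤ i) :
    ∑ v ∈ Icc u i, pmoeb v i = if u = i then 1 else 0 := by
  rcases h.eq_or_lt with rfl | hlt
  · rw [Icc_self, sum_singleton, pmoeb, if_pos rfl, if_pos rfl]
  have hrec : pmoeb u i = -∑ v ∈ Ioc u i, pmoeb v i := by
    rw [pmoeb, if_neg hlt.ne, if_pos hlt, sum_attach _ (fun v => pmoeb v i)]
    congr 2
    ext v
    simp
  rw [Icc_eq_cons_Ioc h, sum_cons, hrec, if_neg hlt.ne, neg_add_cancel]

lemma eq_pmoeb_of_sum_Icc {i : P} (A : P → ℤ)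
    (hA : ∀ u ≤ i, ∑ v ∈ Icc u i, A v = if u = i then 1 else 0) {u : P} (hu : u ≤ i) :
    A u = pmoeb u i := by
  induction u using WellFoundedGT.induction with
  | _ u ih =>
    have hIoc : ∑ v ∈ Ioc u i, A v = ∑ v ∈ Ioc u i, pmoeb v i :=
      sum_congr rfl fun v hv => ih v (mem_Ioc.1 hv).1 (mem_Ioc.1 hv).2
    have hA' := hA u hu
    have hmoeb := sum_Icc_pmoeb hu
    rw [Icc_eq_cons_Ioc hu, sum_cons] at hA' hmoeb
    linarith

lemma sum_fiber_eq_pmoeb {α : Type*} [Fintype α] (c : α → P) (m : α → ℤ) {i : P}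
    (hc : ∀ a, c a ≤ i) (hm : ∀ u ≤ i, ∑ a with u ≤ c a, m a = if u = i then 1 else 0)
    {u : P} (hu : u ≤ i) :
    ∑ a with c a = u, m a = pmoeb u i := by
  refine eq_pmoeb_of_sum_Icc (fun v => ∑ a with c a = v, m a) (fun v hv => ?_) hu
  rw [← hm v hv, ← sum_fiberwise_of_maps_to (g := c) (t := Icc v i)]
  · refine sum_congr rfl fun w hw => ?_
    rw [filter_filter]
    refine sum_congr (filter_congr fun a _ => ?_) fun _ _ => rfl
    exact (and_iff_right_of_imp fun h => h ▸ (mem_Icc.1 hw).1).symm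
  · intro a ha
    exact mem_Icc.2 ⟨(mem_filter.1 ha).2, hc a⟩

end Moebius

section CompatCore

variable {F G H : Type*} [Group F] [Group G] [Group H]

lemma mem_p1 {V : Subgroup (G × H)} {g : G} : g ∈ p1 V ↔ ∃ h : H, (g, h) ∈ V := by
  simp [p1]

lemma mem_p2 {U : Subgroup (F × G)} {g : G} : g ∈ p2 U ↔ ∃ f : F, (f, g) ∈ U := by
  simp [p2]

lemma starProd_mono {U U' : Subgroup (F × G)} {V V' : Subgroup (G × H)} (hU : U ≤ U')
    (hV : V ≤ V') : starProd U V ≤ starProd U' V' :=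
  fun _ ⟨s, hs, hs'⟩ => ⟨s, hU hs, hV hs'⟩

/-- The largest pair below `q` whose components satisfy `p₂(U) = p₁(V)`. -/
def compatCore (q : Subgroup (F × G) × Subgroup (G × H)) :
    Subgroup (F × G) × Subgroup (G × H) :=
  (q.1 ⊓ Subgroup.prod ⊤ (p1 q.2), q.2 ⊓ Subgroup.prod (p2 q.1) ⊤)

lemma mem_compatCore_fst {q : Subgroup (F × G) × Subgroup (G × H)} {x : F × G} :
    x ∈ (compatCore q).1 ↔ x ∈ q.1 ∧ x.2 ∈ p1 q.2 := by
  simp [compatCore, Subgroup.mem_prod]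

lemma mem_compatCore_snd {q : Subgroup (F × G) × Subgroup (G × H)} {x : G × H} :
    x ∈ (compatCore q).2 ↔ x ∈ q.2 ∧ x.1 ∈ p2 q.1 := by
  simp [compatCore, Subgroup.mem_prod]

lemma compatCore_le (q : Subgroup (F × G) × Subgroup (G × H)) : compatCore q ≤ q :=
  ⟨inf_le_left, inf_le_left⟩

lemma compatCore_mono : Monotone (compatCore (F := F) (G := G) (H := H)) := fun _ _ h =>
  ⟨inf_le_inf h.1 (Subgroup.prod_mono le_rfl (Subgroup.map_mono h.2)),
    inf_le_inf h.2 (Subgroup.prod_mono (Subgroup.map_mono h.1) le_rfl)⟩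

lemma p2_compatCore_fst_eq_p1_snd (q : Subgroup (F × G) × Subgroup (G × H)) :
    p2 (compatCore q).1 = p1 (compatCore q).2 := by
  ext g
  simp only [mem_p1, mem_p2, mem_compatCore_fst, mem_compatCore_snd]
  exact ⟨fun ⟨f, hf, h, hh⟩ => ⟨h, hh, f, hf⟩, fun ⟨h, hh, f, hf⟩ => ⟨f, hf, h, hh⟩⟩

lemma compatCore_eq_self {q : Subgroup (F × G) × Subgroup (G × H)} (h : p2 q.1 = p1 q.2) :
    compatCore q = q := by
  refine Prod.ext (SetLike.ext fun x => ?_) (SetLike.ext fun x => ?_)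
  · rw [mem_compatCore_fst, ← h, and_iff_left_iff_imp]
    exact fun hx => mem_p2.2 ⟨x.1, hx⟩
  · rw [mem_compatCore_snd, h, and_iff_left_iff_imp]
    exact fun hx => mem_p1.2 ⟨x.2, hx⟩

lemma le_compatCore_iff {q r : Subgroup (F × G) × Subgroup (G × H)} (hr : p2 r.1 = p1 r.2) :
    r ≤ compatCore q ↔ r ≤ q :=
  ⟨fun h => h.trans (compatCore_le q),
    fun h => compatCore_eq_self hr ▸ compatCore_mono h⟩

lemma starProd_compatCore (q : Subgroup (F × G) × Subgroup (G × H)) :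
    starProd (compatCore q).1 (compatCore q).2 = starProd q.1 q.2 := by
  ext x
  simp only [mem_starProd, mem_compatCore_fst, mem_compatCore_snd]
  exact ⟨fun ⟨s, ⟨h1, _⟩, h2, _⟩ => ⟨s, h1, h2⟩,
    fun ⟨s, h1, h2⟩ => ⟨s, ⟨h1, mem_p1.2 ⟨x.2, h2⟩⟩, h2, mem_p2.2 ⟨x.1, h1⟩⟩⟩

lemma k2_inf_k1_compatCore (q : Subgroup (F × G) × Subgroup (G × H)) :
    k2 (compatCore q).1 ⊓ k1 (compatCore q).2 = k2 q.1 ⊓ k1 q.2 := by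
  ext g
  simp only [Subgroup.mem_inf, k1, k2, Subgroup.mem_comap, MonoidHom.inl_apply,
    MonoidHom.inr_apply, mem_compatCore_fst, mem_compatCore_snd]
  exact ⟨fun ⟨⟨h1, _⟩, h2, _⟩ => ⟨h1, h2⟩,
    fun ⟨h1, h2⟩ => ⟨⟨h1, mem_p1.2 ⟨1, h2⟩⟩, h2, mem_p2.2 ⟨1, h1⟩⟩⟩

lemma sigmaC_compatCore {𝕂 : Type*} [Field 𝕂] (ℓ : ℕ+ →* 𝕂ˣ) [Finite G]
    (q : Subgroup (F × G) × Subgroup (G × H)) :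
    sigmaC ℓ (compatCore q).1 (compatCore q).2 = sigmaC ℓ q.1 q.2 := by
  exact congrArg (fun S : Subgroup G => ellG ℓ S) (k2_inf_k1_compatCore q)

end CompatCore

section Pairs

variable {F G H : Type*} [Group F] [Group G] [Group H]
  {I : Subgroup (F × G)} {J : Subgroup (G × H)} {K : Subgroup (F × H)}

def tauPairs (I : Subgroup (F × G)) (J : Subgroup (G × H)) (K : Subgroup (F × H)) :
    Set (Subgroup (F × G) × Subgroup (G × H)) :=
  {q | q.1 ≤ I ∧ q.2 ≤ J ∧ K ≤ starProd q.1 q.2}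

lemma Rposet_subset_tauPairs : Rposet I J K ⊆ tauPairs I J K :=
  fun _ hq => ⟨hq.1, hq.2.1, hq.2.2.1⟩

lemma le_of_mem_tauPairs {q : Subgroup (F × G) × Subgroup (G × H)} (hq : q ∈ tauPairs I J K) :
    q ≤ (I, J) :=
  ⟨hq.1, hq.2.1⟩

lemma compatCore_mem_Rposet {q : Subgroup (F × G) × Subgroup (G × H)}
    (hq : q ∈ tauPairs I J K) : compatCore q ∈ Rposet I J K :=
  ⟨(compatCore_le q).1.trans hq.1, (compatCore_le q).2.trans hq.2.1,
    (starProd_compatCore q).symm ▸ hq.2.2, p2_compatCore_fst_eq_p1_snd q⟩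

lemma sum_moeb_mul_moeb_of_le_compatCore [Finite F] [Finite G] [Finite H]
    [Fintype (tauPairs I J K)] {q : Subgroup (F × G) × Subgroup (G × H)}
    (hq : q ∈ Rposet I J K) :
    ∑ a : tauPairs I J K with q ≤ compatCore a.1, moeb a.1.1 I * moeb a.1.2 J =
      if q = (I, J) then 1 else 0 := by
  let := Fintype.ofFinite (Subgroup (F × G))
  let := Fintype.ofFinite (Subgroup (G × H))
  let := Fintype.toLocallyFiniteOrder (α := Subgroup (F × G))
  let := Fintype.toLocallyFiniteOrder (α := Subgroup (G × H))
  have hsupp : (univ.filter fun a : tauPairs I J K => q ≤ compatCore a.1).map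
      (Function.Embedding.subtype _) = Icc q.1 I ×ˢ Icc q.2 J := by
    ext p
    simp only [mem_map, mem_filter, mem_univ, true_and, Function.Embedding.coe_subtype,
      Subtype.exists, exists_and_left, exists_prop, exists_eq_right_right, mem_product, mem_Icc,
      le_compatCore_iff hq.2.2.2]
    exact ⟨fun ⟨⟨hU, hV⟩, hp⟩ => ⟨⟨hU, hp.1⟩, hV, hp.2.1⟩,
      fun ⟨⟨hU, hI⟩, hV, hJ⟩ => ⟨⟨hU, hV⟩, hI, hJ, hq.2.2.1.trans (starProd_mono hU hV)⟩⟩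
  calc ∑ a : tauPairs I J K with q ≤ compatCore a.1, moeb a.1.1 I * moeb a.1.2 J
      = ∑ p ∈ Icc q.1 I ×ˢ Icc q.2 J, moeb p.1 I * moeb p.2 J := by
        rw [← hsupp, sum_map]; rfl
    _ = (∑ U ∈ Icc q.1 I, pmoeb U I) * ∑ V ∈ Icc q.2 J, pmoeb V J := by
        rw [sum_product, sum_mul_sum]; rfl
    _ = if q = (I, J) then 1 else 0 := by
        rw [sum_Icc_pmoeb hq.1, sum_Icc_pmoeb hq.2.1]
        simp only [ite_zero_mul_ite_zero, mul_one, Prod.ext_iff]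

end Pairs

theorem tau_eq_sum_Rposet_general {𝕂 : Type*} [Field 𝕂] (ℓ : ℕ+ →* 𝕂ˣ)
    (F G H : Type*) [Group F] [Group G] [Group H] [Finite F] [Finite G] [Finite H]
    (I : Subgroup (F × G)) (J : Subgroup (G × H)) (K : Subgroup (F × H))
    (hcomp : p2 I = p1 J) (hK : K ≤ starProd I J) :
    tau ℓ I J K =
      ∑ᶠ q : Rposet I J K,
        (pmoeb q (⟨(I, J), le_refl I, le_refl J, hK, hcomp⟩ : Rposet I J K) : 𝕂) *
          sigmaC ℓ q.1.1 q.1.2 := by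
  let := Fintype.ofFinite (tauPairs I J K)
  let := Fintype.ofFinite (Rposet I J K)
  let := Fintype.toLocallyFiniteOrder (α := Rposet I J K)
  set top : Rposet I J K := ⟨(I, J), le_refl I, le_refl J, hK, hcomp⟩
  let core : tauPairs I J K → Rposet I J K := fun a => ⟨compatCore a.1, compatCore_mem_Rposet a.2⟩
  have hle_top (v : Rposet I J K) : v ≤ top := le_of_mem_tauPairs (Rposet_subset_tauPairs v.2)
  have hfiber (v : Rposet I J K) :
      ∑ a with core a = v, moeb a.1.1 I * moeb a.1.2 J = pmoeb v top :=
    sum_fiber_eq_pmoeb core (fun a => moeb a.1.1 I * moeb a.1.2 J) (fun a => hle_top (core a))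
      (fun u _ => by
        simpa only [← Subtype.coe_le_coe, Subtype.ext_iff] using
          sum_moeb_mul_moeb_of_le_compatCore u.2)
      (hle_top v)
  calc tau ℓ I J K
      = ∑ a : tauPairs I J K, ((moeb a.1.1 I * moeb a.1.2 J : ℤ) : 𝕂) *
          sigmaC ℓ (core a).1.1 (core a).1.2 := by
        rw [tau, ← tauPairs, ← finsum_subtype_eq_finsum_cond, finsum_eq_sum_of_fintype]
        simp only [core, sigmaC_compatCore, Int.cast_mul]
    _ = ∑ v : Rposet I J K, ((∑ a with core a = v, moeb a.1.1 I * moeb a.1.2 J : ℤ) : 𝕂) *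
          sigmaC ℓ v.1.1 v.1.2 := by
        rw [← sum_fiberwise univ core]
        refine sum_congr rfl fun v _ => ?_
        rw [Int.cast_sum, sum_mul]
        exact sum_congr rfl fun a ha => by rw [(mem_filter.1 ha).2]
    _ = _ := by
        rw [finsum_eq_sum_of_fintype]
        simp only [hfiber]

/-- **Boltje–Danz.** If `(I, J)` is strongly compatible and `K` is an adequate subgroup
of `I * J`, then `τ_K^{I,J} = ∑_{(U,V) ∈ R_K^{I,J}} möb_{R_K^{I,J}}((U,V),(I,J)) σ(U,V)`. -/
theorem tau_eq_sum_Rposet {𝕂 : Type*} [Field 𝕂] [CharZero 𝕂] (ℓ : ℕ+ →* 𝕂ˣ)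
    (F G H : Type*) [Group F] [Group G] [Group H] [Finite F] [Finite G] [Finite H]
    (I : Subgroup (F × G)) (J : Subgroup (G × H)) (K : Subgroup (F × H))
    (hcomp : p2 I = p1 J) (hK : K ≤ starProd I J)
    (h1 : p1 K = p1 (starProd I J)) (h2 : p2 K = p2 (starProd I J)) :
    tau ℓ I J K =
      ∑ᶠ q : Rposet I J K,
        (pmoeb q (⟨(I, J), le_refl I, le_refl J, hK, hcomp⟩ : Rposet I J K) : 𝕂) *
          sigmaC ℓ q.1.1 q.1.2 :=
  tau_eq_sum_Rposet_general ℓ F G H I J K hcomp hK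

end SubgroupCat
end

section
/- Let F, G, H be finite groups, let A ≤ F and B ≤ G be subgroups, let φ : B → A be a group isomorphism, let I = {(φ(b), b) : b ∈ B} ≤ F × G be the graph of φ, and let J ≤ G × H be any subgroup with p₁(J) = B. Then I * J = {(φ(b), h) : (b, h) ∈ J}, and for every subgroup L ≤ F × H one has τ_L^{I,J} = 1 if L = I * J and τ_L^{I,J} = 0 otherwise. -/
open scoped Classical

namespace SubgroupCat

variable {R S T : Type*}

/-! `I` is the graph of an isomorphism exactly when `k₁(I)` and `k₂(I)` are trivial. Then
`σ(U, V) = 1` for every `U ≤ I`, and since in `I` each coordinate determines the other, for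
`U ≤ I` the condition `L ≤ U * V` splits into `I ∩ fst⁻¹(p₁(L)) ≤ U` and
`p₁(L) ≤ p₁(I) ∧ Iᵒᵖ * L ≤ V`. So `τ_L^{I,J}` is a product of two sums of the Möbius function over
intervals `[U₀, I]` and `[V₀, J]`, each equal to `1` or `0` according as the interval is a point,
and both intervals are points exactly when `L = I * J`. -/

section Moebius

variable {P : Type*} [PartialOrder P] [Fintype P]

theorem pmoeb_of_lt {u i : P} (h : u < i) :
    pmoeb u i = -∑ v with u < v ∧ v ≤ i, pmoeb v i := by
  rw [pmoeb, if_neg h.ne, if_pos h, Finset.sum_attach _ fun v => pmoeb v i]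
  congr 2
  ext v
  simp

theorem sum_pmoeb (u i : P) :
    ∑ v with u ≤ v ∧ v ≤ i, pmoeb v i = if u = i then 1 else 0 := by
  rcases eq_or_ne u i with rfl | hne
  · rw [if_pos rfl, Finset.sum_eq_single_of_mem u (by simp) fun v hv hvu => ?_]
    · rw [pmoeb, if_pos rfl]
    · simp only [Finset.mem_filter, Finset.mem_univ, true_and] at hv
      exact absurd (le_antisymm hv.2 hv.1) hvu
  rw [if_neg hne]
  by_cases hle : u ≤ i
  · have hIcc : Finset.univ.filter (fun v => u ≤ v ∧ v ≤ i) =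
        insert u (Finset.univ.filter fun v => u < v ∧ v ≤ i) := by
      ext v
      simp only [Finset.mem_filter, Finset.mem_univ, true_and, Finset.mem_insert]
      constructor
      · rintro ⟨huv, hvi⟩
        exact huv.eq_or_lt.imp Eq.symm fun h => ⟨h, hvi⟩
      · rintro (rfl | ⟨huv, hvi⟩)
        exacts [⟨le_rfl, hle⟩, ⟨huv.le, hvi⟩]
    rw [hIcc, Finset.sum_insert (by simp), pmoeb_of_lt (lt_of_le_of_ne hle hne), neg_add_cancel]
  · refine Finset.sum_eq_zero fun v hv => absurd ?_ hle
    simp only [Finset.mem_filter, Finset.mem_univ, true_and] at hv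
    exact hv.1.trans hv.2

theorem sum_moeb {K : Type*} [AddCommGroupWithOne K] {G : Type*} [Group G] [Finite G]
    [Fintype (Subgroup G)] (U I : Subgroup G) :
    ∑ V with U ≤ V ∧ V ≤ I, (moeb V I : K) = if U = I then 1 else 0 := by
  rw [← Int.cast_sum]
  exact_mod_cast congrArg (Int.cast : ℤ → K) (sum_pmoeb U I)

end Moebius

section StarProduct

variable [Group R] [Group S] [Group T]

@[simp] theorem mem_p1_s11 {U : Subgroup (R × S)} {r : R} : r ∈ p1 U ↔ ∃ s, (r, s) ∈ U := by
  simp [p1]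

@[simp] theorem mem_p2_s11 {U : Subgroup (R × S)} {s : S} : s ∈ p2 U ↔ ∃ r, (r, s) ∈ U := by
  simp [p2]

theorem eq_of_mem_of_k1_eq_bot {U : Subgroup (R × S)} (hU : k1 U = ⊥) {r r' : R} {s : S}
    (h : (r, s) ∈ U) (h' : (r', s) ∈ U) : r = r' := by
  have hk : r⁻¹ * r' ∈ k1 U := by simpa [k1] using mul_mem (inv_mem h) h'
  rwa [hU, Subgroup.mem_bot, inv_mul_eq_one] at hk

theorem eq_of_mem_of_k2_eq_bot {U : Subgroup (R × S)} (hU : k2 U = ⊥) {r : R} {s s' : S}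
    (h : (r, s) ∈ U) (h' : (r, s') ∈ U) : s = s' := by
  have hk : s⁻¹ * s' ∈ k2 U := by simpa [k2] using mul_mem (inv_mem h) h'
  rwa [hU, Subgroup.mem_bot, inv_mul_eq_one] at hk

def opp (U : Subgroup (R × S)) : Subgroup (S × R) :=
  U.comap (MulEquiv.prodComm : S × R ≃* R × S).toMonoidHom

theorem inf_comap_fst_eq_self_iff {I : Subgroup (R × S)} {A : Subgroup R} :
    I ⊓ A.comap (MonoidHom.fst R S) = I ↔ p1 I ≤ A := by
  rw [inf_eq_left, p1, Subgroup.map_le_iff_le_comap]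

variable {I U : Subgroup (R × S)} {J V : Subgroup (S × T)} {L : Subgroup (R × T)}

theorem le_starProd_iff_of_le (hI : k2 I = ⊥) (hU : U ≤ I) :
    L ≤ starProd U V ↔ I ⊓ (p1 L).comap (MonoidHom.fst R S) ≤ U ∧ L ≤ starProd I V := by
  constructor
  · intro hL
    refine ⟨fun p ⟨hpI, hpL⟩ => ?_, fun p hp => ?_⟩
    · obtain ⟨t, ht⟩ := mem_p1_s11.1 hpL
      obtain ⟨s, hsU, -⟩ := hL ht
      rwa [eq_of_mem_of_k2_eq_bot hI (hU hsU) hpI] at hsU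
    · obtain ⟨s, hsU, hsV⟩ := hL hp
      exact ⟨s, hU hsU, hsV⟩
  · rintro ⟨hmin, hL⟩ p hp
    obtain ⟨s, hsI, hsV⟩ := hL hp
    exact ⟨s, hmin ⟨hsI, mem_p1_s11.2 ⟨p.2, hp⟩⟩, hsV⟩

theorem le_starProd_iff (hI : k2 I = ⊥) :
    L ≤ starProd I V ↔ p1 L ≤ p1 I ∧ starProd (opp I) L ≤ V := by
  constructor
  · intro hL
    refine ⟨fun r hr => ?_, fun q ⟨r, hrI, hrL⟩ => ?_⟩
    · obtain ⟨t, ht⟩ := mem_p1_s11.1 hr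
      obtain ⟨s, hsI, -⟩ := hL ht
      exact mem_p1_s11.2 ⟨s, hsI⟩
    · obtain ⟨s, hsI, hsV⟩ := hL hrL
      rwa [eq_of_mem_of_k2_eq_bot hI hsI hrI] at hsV
  · rintro ⟨hA, hV⟩ p hp
    obtain ⟨s, hs⟩ := mem_p1_s11.1 (hA (mem_p1_s11.2 ⟨p.2, hp⟩))
    exact ⟨s, hs, hV ⟨p.1, hs, hp⟩⟩

theorem p1_starProd (hJ : p2 I ≤ p1 J) : p1 (starProd I J) = p1 I := by
  refine le_antisymm (fun r hr => ?_) fun r hr => ?_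
  · obtain ⟨t, s, hs, -⟩ := mem_p1_s11.1 hr
    exact mem_p1_s11.2 ⟨s, hs⟩
  · obtain ⟨s, hs⟩ := mem_p1_s11.1 hr
    obtain ⟨t, ht⟩ := mem_p1_s11.1 (hJ (mem_p2_s11.2 ⟨r, hs⟩))
    exact mem_p1_s11.2 ⟨t, s, hs, ht⟩

theorem starProd_opp_starProd (hI : k2 I = ⊥) (hJ : p1 J ≤ p2 I) :
    starProd (opp I) (starProd I J) = J := by
  refine le_antisymm ?_ fun q hq => ?_
  · rintro q ⟨r, hrI, s, hsI, hsJ⟩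
    rwa [eq_of_mem_of_k2_eq_bot hI hsI hrI] at hsJ
  · obtain ⟨r, hr⟩ := mem_p2_s11.1 (hJ (mem_p1_s11.2 ⟨q.2, hq⟩))
    exact ⟨r, hr, q.1, hr, hq⟩

theorem eq_starProd_iff (h1 : k1 I = ⊥) (h2 : k2 I = ⊥) (hJ : p1 J = p2 I) :
    L = starProd I J ↔ p1 L = p1 I ∧ starProd (opp I) L = J := by
  constructor
  · rintro rfl
    exact ⟨p1_starProd hJ.ge, starProd_opp_starProd h2 hJ.le⟩
  · rintro ⟨hA, hV⟩
    refine le_antisymm ((le_starProd_iff h2).2 ⟨hA.le, hV.le⟩) fun p ⟨s, hsI, hsJ⟩ => ?_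
    obtain ⟨r, hrI, hrL⟩ : ∃ r, (r, s) ∈ I ∧ (r, p.2) ∈ L := by rwa [← hV] at hsJ
    rwa [eq_of_mem_of_k1_eq_bot h1 hrI hsI] at hrL

theorem k1_range_prod {K : Type*} [Group K] (f : K →* R) {g : K →* S}
    (hg : Function.Injective g) : k1 (f.prod g).range = ⊥ := by
  refine (Subgroup.eq_bot_iff_forall _).2 fun r ⟨k, hk⟩ => ?_
  simp only [MonoidHom.prod_apply, MonoidHom.inl_apply, Prod.mk.injEq] at hk
  rw [← hk.1, hg (hk.2.trans (map_one g).symm), map_one]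

theorem k2_range_prod {K : Type*} [Group K] {f : K →* R} (hf : Function.Injective f)
    (g : K →* S) : k2 (f.prod g).range = ⊥ := by
  refine (Subgroup.eq_bot_iff_forall _).2 fun s ⟨k, hk⟩ => ?_
  simp only [MonoidHom.prod_apply, MonoidHom.inr_apply, Prod.mk.injEq] at hk
  rw [← hk.2, hf (hk.1.trans (map_one f).symm), map_one]

theorem p2_range_prod {K : Type*} [Group K] (f : K →* R) (g : K →* S) :
    p2 (f.prod g).range = g.range := by
  rw [p2, MonoidHom.map_range, MonoidHom.snd_comp_prod]

end StarProduct

section Tau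

variable {𝕂 : Type*} [Field 𝕂] (ℓ : ℕ+ →* 𝕂ˣ) {F G H : Type*} [Group F] [Group G] [Group H]

theorem sigmaC_eq_one_of_k2_eq_bot [Finite G] {U : Subgroup (F × G)} (hU : k2 U = ⊥)
    (V : Subgroup (G × H)) : sigmaC ℓ U V = 1 := by
  have hcard : Nat.card ↥(k2 U ⊓ k1 V) = 1 := by simp [hU]
  rw [sigmaC, ellG, show (⟨_, Nat.card_pos⟩ : ℕ+) = 1 from PNat.eq hcard]
  exact congrArg Units.val (map_one ℓ)

variable [Finite F] [Finite G] [Finite H]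

theorem tau_eq_mul_of_k2_eq_bot [Fintype (Subgroup (F × G))] [Fintype (Subgroup (G × H))]
    {I : Subgroup (F × G)} (hI : k2 I = ⊥) (J : Subgroup (G × H)) (L : Subgroup (F × H)) :
    tau ℓ I J L =
      (∑ U with I ⊓ (p1 L).comap (MonoidHom.fst F G) ≤ U ∧ U ≤ I, (moeb U I : 𝕂)) *
        ∑ V with V ≤ J ∧ L ≤ starProd I V, (moeb V J : 𝕂) := by
  have hpairs : {q : Subgroup (F × G) × Subgroup (G × H) |
      q.1 ≤ I ∧ q.2 ≤ J ∧ L ≤ starProd q.1 q.2} =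
      ↑((Finset.univ.filter fun U => I ⊓ (p1 L).comap (MonoidHom.fst F G) ≤ U ∧ U ≤ I) ×ˢ
        (Finset.univ.filter fun V => V ≤ J ∧ L ≤ starProd I V)) := by
    ext ⟨U, V⟩
    simp only [Set.mem_ofPred_eq, Finset.coe_product, Finset.coe_filter, Finset.mem_univ,
      true_and, Set.mem_prod]
    constructor
    · rintro ⟨hU, hV, hL⟩
      obtain ⟨hmin, hIV⟩ := (le_starProd_iff_of_le hI hU).1 hL
      exact ⟨⟨hmin, hU⟩, hV, hIV⟩
    · rintro ⟨⟨hmin, hU⟩, hV, hIV⟩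
      exact ⟨hU, hV, (le_starProd_iff_of_le hI hU).2 ⟨hmin, hIV⟩⟩
  rw [tau, hpairs, finsum_mem_coe_finset, Finset.sum_product, Finset.sum_mul_sum]
  refine Finset.sum_congr rfl fun U hU => Finset.sum_congr rfl fun V _ => ?_
  have hUI : U ≤ I := (Finset.mem_filter.1 hU).2.2
  rw [sigmaC_eq_one_of_k2_eq_bot ℓ (eq_bot_mono (Subgroup.comap_mono hUI) hI), mul_one]

theorem tau_eq_ite_of_k1_eq_bot_of_k2_eq_bot {I : Subgroup (F × G)} (h1 : k1 I = ⊥)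
    (h2 : k2 I = ⊥) {J : Subgroup (G × H)} (hJ : p1 J = p2 I) (L : Subgroup (F × H)) :
    tau ℓ I J L = if L = starProd I J then 1 else 0 := by
  have := Fintype.ofFinite (Subgroup (F × G))
  have := Fintype.ofFinite (Subgroup (G × H))
  have hsumV : ∑ V with V ≤ J ∧ L ≤ starProd I V, (moeb V J : 𝕂) =
      if p1 L ≤ p1 I ∧ starProd (opp I) L = J then 1 else 0 := by
    simp_rw [le_starProd_iff h2]
    by_cases hA : p1 L ≤ p1 I
    · simp only [hA, true_and, ← sum_moeb (starProd (opp I) L) J, and_comm]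
    · simp [hA]
  rw [tau_eq_mul_of_k2_eq_bot ℓ h2, sum_moeb, hsumV, ite_zero_mul_ite_zero, mul_one]
  refine if_congr ?_ rfl rfl
  rw [inf_comap_fst_eq_self_iff, eq_starProd_iff h1 h2 hJ, le_antisymm_iff (a := p1 L)]
  tauto

end Tau

theorem tau_graph_left_general {𝕂 : Type*} [Field 𝕂] (ℓ : ℕ+ →* 𝕂ˣ)
    (F G H : Type*) [Group F] [Group G] [Group H] [Finite F] [Finite G] [Finite H]
    (A : Subgroup F) (B : Subgroup G) (φ : B ≃* A)
    (I : Subgroup (F × G)) (hI : I = ((A.subtype.comp φ.toMonoidHom).prod B.subtype).range)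
    (J : Subgroup (G × H)) (hJ : p1 J = B) :
    (∀ p : F × H, p ∈ starProd I J ↔
      ∃ b : B, p.1 = ((φ b : A) : F) ∧ (((b : G)), p.2) ∈ J) ∧
    ∀ L : Subgroup (F × H), tau ℓ I J L = if L = starProd I J then 1 else 0 := by
  subst hI
  refine ⟨fun p => ?_, tau_eq_ite_of_k1_eq_bot_of_k2_eq_bot ℓ
    (k1_range_prod _ B.subtype_injective)
    (k2_range_prod (A.subtype_injective.comp φ.injective :) _)
    (by rw [p2_range_prod, B.range_subtype, hJ])⟩
  simp [eq_comm]

/-- If `I` is the graph `{(φ(b), b) : b ∈ B}` of an isomorphism `φ : B → A` and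
`J ≤ G × H` has `p₁(J) = B`, then `I * J = {(φ(b), h) : (b, h) ∈ J}` and
`τ_L^{I,J} = 1` if `L = I * J`, and `τ_L^{I,J} = 0` otherwise. -/
theorem tau_graph_left {𝕂 : Type*} [Field 𝕂] [CharZero 𝕂] (ℓ : ℕ+ →* 𝕂ˣ)
    (F G H : Type*) [Group F] [Group G] [Group H] [Finite F] [Finite G] [Finite H]
    (A : Subgroup F) (B : Subgroup G) (φ : B ≃* A)
    (I : Subgroup (F × G)) (hI : I = ((A.subtype.comp φ.toMonoidHom).prod B.subtype).range)
    (J : Subgroup (G × H)) (hJ : p1 J = B) :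
    (∀ p : F × H, p ∈ starProd I J ↔
      ∃ b : B, p.1 = ((φ b : A) : F) ∧ (((b : G)), p.2) ∈ J) ∧
    ∀ L : Subgroup (F × H), tau ℓ I J L = if L = starProd I J then 1 else 0 :=
  tau_graph_left_general ℓ F G H A B φ I hI J hJ

end SubgroupCat
end

section
/- Let F, G, H be finite groups, let A ≤ F, B ≤ G, C ≤ H be subgroups, let φ : B → A and ψ : B → C be surjective group homomorphisms, and let θ : C → A be a group isomorphism. Set I = {(φ(b), b) : b ∈ B} ≤ F × G, J = {(b, ψ(b)) : b ∈ B} ≤ G × H, and K = {(θ(c), c) : c ∈ C} ≤ F × H. Suppose K ≤ I * J. Then: (i) I * J = {(φ(b), ψ(b)) : b ∈ B}; (ii) p₂(I) = p₁(J), p₁(K) = p₁(I * J), and p₂(K) = p₂(I * J); (iii) τ_K^{I,J} = Σ_S möb(S, B) · ℓ(ker(φ) ∩ S ∩ ker(ψ)), the sum over all subgroups S ≤ B such that K ≤ {(φ(s), ψ(s)) : s ∈ S}; (iv) if ker(φ) = ker(ψ), then K = I * J. -/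
open scoped Classical

namespace SubgroupCat

variable {R S T : Type*}

section MoebiusAux

variable {P : Type*} [PartialOrder P] [Finite P]

lemma pmoeb_def (u i : P) : pmoeb u i =
    if u = i then 1 else if u < i then
      - ∑ v ∈ ({v : P | u < v ∧ v ≤ i}.toFinite.toFinset), pmoeb v i
    else 0 := by
  have ha := Finset.sum_attach ({v : P | u < v ∧ v ≤ i}.toFinite.toFinset)
    (fun v => pmoeb v i)
  rw [pmoeb, ha]

lemma interval_split (u i : P) (h : u ≤ i) :
    ({v : P | u ≤ v ∧ v ≤ i}.toFinite.toFinset) =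
      insert u ({v : P | u < v ∧ v ≤ i}.toFinite.toFinset) := by
  ext v
  simp only [Set.Finite.mem_toFinset, Set.mem_setOf_eq, Finset.mem_insert]
  constructor
  · rintro ⟨h1, h2⟩
    rcases eq_or_lt_of_le h1 with h1 | h1
    · exact Or.inl h1.symm
    · exact Or.inr ⟨h1, h2⟩
  · rintro (rfl | ⟨h1, h2⟩)
    · exact ⟨le_rfl, h⟩
    · exact ⟨h1.le, h2⟩

lemma pmoeb_sum (u i : P) (h : u ≤ i) :
    ∑ v ∈ ({v : P | u ≤ v ∧ v ≤ i}.toFinite.toFinset), pmoeb v i =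
      if u = i then 1 else 0 := by
  rw [interval_split u i h, Finset.sum_insert (by simp)]
  by_cases hui : u = i
  · subst hui
    have : ({v : P | u < v ∧ v ≤ u}.toFinite.toFinset) = ∅ := by
      ext v; simp only [Set.Finite.mem_toFinset, Set.mem_setOf_eq, Finset.notMem_empty,
        iff_false]
      rintro ⟨h1, h2⟩; exact absurd (h1.trans_le h2) (lt_irrefl u)
    rw [this, pmoeb_def]
    simp
  · rw [pmoeb_def]
    simp [hui, lt_of_le_of_ne h hui]

lemma pmoeb_unique (i : P) (m : P → ℤ)
    (hm : ∀ u, u ≤ i →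
      ∑ v ∈ ({v : P | u ≤ v ∧ v ≤ i}.toFinite.toFinset), m v = if u = i then 1 else 0) :
    ∀ u, u ≤ i → m u = pmoeb u i := by
  suffices H : ∀ n : ℕ, ∀ u, ({v : P | u ≤ v ∧ v ≤ i}.toFinite.toFinset).card ≤ n →
      u ≤ i → m u = pmoeb u i by
    intro u hu; exact H _ u le_rfl hu
  intro n
  induction n with
  | zero =>
    intro u hc hu
    exfalso
    have : u ∈ ({v : P | u ≤ v ∧ v ≤ i}.toFinite.toFinset) := by
      simp [Set.Finite.mem_toFinset, hu]
    have := Finset.card_pos.2 ⟨u, this⟩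
    omega
  | succ n ih =>
    intro u hc hu
    have h1 := hm u hu
    have h2 := pmoeb_sum u i hu
    rw [interval_split u i hu, Finset.sum_insert (by simp)] at h1 h2
    have hsub : ∀ v ∈ ({v : P | u < v ∧ v ≤ i}.toFinite.toFinset), m v = pmoeb v i := by
      intro v hv
      rw [Set.Finite.mem_toFinset] at hv
      apply ih v _ hv.2
      have hss : ({w : P | v ≤ w ∧ w ≤ i}.toFinite.toFinset) ⊆
          ({w : P | u < w ∧ w ≤ i}.toFinite.toFinset) := by
        intro w hw
        rw [Set.Finite.mem_toFinset] at hw ⊢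
        exact ⟨hv.1.trans_le hw.1, hw.2⟩
      have h3 : ({w : P | u < w ∧ w ≤ i}.toFinite.toFinset).card ≤ n := by
        have := Finset.card_insert_of_notMem (a := u)
          (s := ({w : P | u < w ∧ w ≤ i}.toFinite.toFinset)) (by simp)
        rw [interval_split u i hu, this] at hc
        omega
      exact le_trans (Finset.card_le_card hss) h3
    rw [Finset.sum_congr rfl hsub] at h1
    omega

lemma pmoeb_transport {Q : Type*} [PartialOrder Q] [Finite Q]
    (i : P) (j : Q) (f : P → Q) (g : Q → P)
    (hfi : f i = j)
    (hmono : ∀ u v : P, u ≤ i → v ≤ i → (u ≤ v ↔ f u ≤ f v))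
    (hg : ∀ w : Q, w ≤ j → g w ≤ i ∧ f (g w) = w) :
    ∀ u, u ≤ i → pmoeb u i = pmoeb (f u) j := by
  have hfinj : ∀ u v : P, u ≤ i → v ≤ i → f u = f v → u = v := fun u v hu hv h =>
    le_antisymm ((hmono u v hu hv).2 h.le) ((hmono v u hv hu).2 h.ge)
  refine fun u hu => (pmoeb_unique i (fun v => if hv : v ≤ i then pmoeb (f v) j else 0)
    (fun w hw => ?_) u hu).symm.trans (by rw [dif_pos hu])
  have hfw : f w ≤ j := hfi ▸ (hmono w i hw le_rfl).1 hw
  have key : ∑ v ∈ ({v : P | w ≤ v ∧ v ≤ i}.toFinite.toFinset),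
      (if hv : v ≤ i then pmoeb (f v) j else 0) =
      ∑ x ∈ ({x : Q | f w ≤ x ∧ x ≤ j}.toFinite.toFinset), pmoeb x j := by
    apply Finset.sum_nbij' (fun v => f v) (fun x => g x)
    · intro v hv
      rw [Set.Finite.mem_toFinset] at hv ⊢
      exact ⟨(hmono w v hw hv.2).1 hv.1, hfi ▸ (hmono v i hv.2 le_rfl).1 hv.2⟩
    · intro x hx
      rw [Set.Finite.mem_toFinset] at hx ⊢
      obtain ⟨hgx, hfgx⟩ := hg x hx.2
      refine ⟨(hmono w (g x) hw hgx).2 (by rw [hfgx]; exact hx.1), hgx⟩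
    · intro v hv
      rw [Set.Finite.mem_toFinset] at hv
      have hfv : f v ≤ j := hfi ▸ (hmono v i hv.2 le_rfl).1 hv.2
      obtain ⟨hgfv, hffv⟩ := hg (f v) hfv
      exact hfinj _ _ hgfv hv.2 hffv
    · intro x hx
      rw [Set.Finite.mem_toFinset] at hx
      exact (hg x hx.2).2
    · intro v hv
      rw [Set.Finite.mem_toFinset] at hv
      rw [dif_pos hv.2]
  rw [key, pmoeb_sum _ _ hfw]
  congr 1
  apply propext
  constructor
  · intro hfw'; exact hfinj w i hw le_rfl (hfw'.trans hfi.symm)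
  · intro hwi; subst hwi; exact hfi

lemma pmoeb_sum_top {L : Type*} [Lattice L] [OrderTop L] [Finite L] [Fintype L] (D : L) :
    ∑ S ∈ Finset.univ.filter (fun S => D ≤ S), pmoeb S (⊤ : L) =
      if D = (⊤ : L) then 1 else 0 := by
  rw [← pmoeb_sum D ⊤ le_top]
  apply Finset.sum_congr _ (fun _ _ => rfl)
  ext v
  simp [Set.Finite.mem_toFinset]

lemma pmoeb_conv {L : Type*} [Lattice L] [OrderTop L] [Finite L] [Fintype L]
    {M : Type*} [CommRing M] (f : L → M) :
    ∑ S₁ : L, ∑ S₂ : L, (pmoeb S₁ ⊤ : M) * (pmoeb S₂ ⊤ : M) * f (S₁ ⊓ S₂) =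
      ∑ D : L, (pmoeb D ⊤ : M) * f D := by
  set g : L → ℤ := fun D =>
    ∑ p ∈ (Finset.univ : Finset (L × L)).filter (fun p => p.1 ⊓ p.2 = D),
      pmoeb p.1 (⊤ : L) * pmoeb p.2 (⊤ : L) with hg
  have hgm : ∀ D : L, g D = pmoeb D (⊤ : L) := by
    refine fun D => pmoeb_unique ⊤ g (fun u _ => ?_) D le_top
    have h0 : ({v : L | u ≤ v ∧ v ≤ ⊤}.toFinite.toFinset) =
        Finset.univ.filter (fun S => u ≤ S) := by
      ext v; simp [Set.Finite.mem_toFinset]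
    have h1 : ∑ v ∈ ({v : L | u ≤ v ∧ v ≤ ⊤}.toFinite.toFinset), g v =
        ∑ p ∈ (Finset.univ : Finset (L × L)).filter (fun p => u ≤ p.1 ⊓ p.2),
          pmoeb p.1 (⊤ : L) * pmoeb p.2 (⊤ : L) := by
      rw [h0, hg]
      rw [Finset.sum_fiberwise_eq_sum_filter (Finset.univ : Finset (L × L))
        (Finset.univ.filter (fun S => u ≤ S)) (fun p => p.1 ⊓ p.2)
        (fun p => pmoeb p.1 (⊤ : L) * pmoeb p.2 (⊤ : L))]
      apply Finset.sum_congr _ (fun _ _ => rfl)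
      ext p
      simp
    have h2 : (Finset.univ : Finset (L × L)).filter (fun p => u ≤ p.1 ⊓ p.2) =
        (Finset.univ.filter (fun S => u ≤ S)) ×ˢ (Finset.univ.filter (fun S => u ≤ S)) := by
      ext p
      simp [le_inf_iff]
    rw [h1, h2]
    rw [Finset.sum_product' (f := fun x y => pmoeb x (⊤ : L) * pmoeb y (⊤ : L))]
    rw [← Finset.sum_mul_sum, pmoeb_sum_top]
    by_cases hu : u = (⊤ : L) <;> simp [hu]
  calc ∑ S₁ : L, ∑ S₂ : L, (pmoeb S₁ ⊤ : M) * (pmoeb S₂ ⊤ : M) * f (S₁ ⊓ S₂)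
      = ∑ p ∈ (Finset.univ : Finset (L × L)) with (p.1 ⊓ p.2) ∈ (Finset.univ : Finset L),
          (pmoeb p.1 ⊤ : M) * (pmoeb p.2 ⊤ : M) * f (p.1 ⊓ p.2) := by
        rw [← Finset.sum_product'
          (f := fun x y => (pmoeb x (⊤:L) : M) * (pmoeb y ⊤ : M) * f (x ⊓ y))]
        apply Finset.sum_congr _ (fun _ _ => rfl)
        ext p; simp
    _ = ∑ D : L, ∑ p ∈ (Finset.univ : Finset (L × L)).filter (fun p => p.1 ⊓ p.2 = D),
          (pmoeb p.1 ⊤ : M) * (pmoeb p.2 ⊤ : M) * f (p.1 ⊓ p.2) :=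
        (Finset.sum_fiberwise_eq_sum_filter (Finset.univ : Finset (L × L))
          (Finset.univ : Finset L) (fun p => p.1 ⊓ p.2)
          (fun p => (pmoeb p.1 (⊤:L) : M) * (pmoeb p.2 ⊤ : M) * f (p.1 ⊓ p.2))).symm
    _ = ∑ D : L, (pmoeb D ⊤ : M) * f D := by
        apply Finset.sum_congr rfl
        intro D _
        rw [← hgm D]
        push_cast [hg]
        rw [Finset.sum_mul]
        apply Finset.sum_congr rfl
        intro p hp
        rw [Finset.mem_filter] at hp
        rw [hp.2]

lemma ellG_congr {𝕂 : Type*} [Field 𝕂] (ℓ : ℕ+ →* 𝕂ˣ) (A B : Type*)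
    [Group A] [Finite A] [Group B] [Finite B] (h : Nat.card A = Nat.card B) :
    ellG ℓ A = ellG ℓ B := by
  unfold ellG
  congr 1
  exact congrArg ℓ (Subtype.ext h)

end MoebiusAux
/-- Key computation for `τ` on graphs of surjections `φ : B → A`, `ψ : B → C` and an
isomorphism `θ : C → A`, where `K ≤ I * J` is the graph of `θ`. -/
theorem tau_epi_epi {𝕂 : Type*} [Field 𝕂] [CharZero 𝕂] (ℓ : ℕ+ →* 𝕂ˣ)
    (F G H : Type*) [Group F] [Group G] [Group H] [Finite F] [Finite G] [Finite H]
    (A : Subgroup F) (B : Subgroup G) (C : Subgroup H)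
    (φ : ↥B →* ↥A) (hφ : Function.Surjective φ)
    (ψ : ↥B →* ↥C) (hψ : Function.Surjective ψ)
    (θ : ↥C ≃* ↥A)
    (I : Subgroup (F × G)) (hI : I = ((A.subtype.comp φ).prod B.subtype).range)
    (J : Subgroup (G × H)) (hJ : J = (B.subtype.prod (C.subtype.comp ψ)).range)
    (K : Subgroup (F × H)) (hK : K = ((A.subtype.comp θ.toMonoidHom).prod C.subtype).range)
    (hKIJ : K ≤ starProd I J) :
    starProd I J = ((A.subtype.comp φ).prod (C.subtype.comp ψ)).range ∧
    p2 I = p1 J ∧ p1 K = p1 (starProd I J) ∧ p2 K = p2 (starProd I J) ∧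
    tau ℓ I J K =
      ∑ᶠ S ∈ {S : Subgroup ↥B |
          K ≤ (((A.subtype.comp φ).prod (C.subtype.comp ψ)).comp S.subtype).range},
        (moeb S ⊤ : 𝕂) * ellG ℓ ↥(φ.ker ⊓ S ⊓ ψ.ker) ∧
    (φ.ker = ψ.ker → K = starProd I J) := by
  classical
  letI : Fintype (Subgroup ↥B) := Fintype.ofFinite _
  letI : Fintype (Subgroup (F × G)) := Fintype.ofFinite _
  letI : Fintype (Subgroup (G × H)) := Fintype.ofFinite _
  set gφ : ↥B →* F × G := (A.subtype.comp φ).prod B.subtype with hgφ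
  set gψ : ↥B →* G × H := B.subtype.prod (C.subtype.comp ψ) with hgψ
  set gc : ↥B →* F × H := (A.subtype.comp φ).prod (C.subtype.comp ψ) with hgc
  have hφinj : Function.Injective gφ := fun b₁ b₂ h => Subtype.ext (congrArg Prod.snd h)
  have hψinj : Function.Injective gψ := fun b₁ b₂ h => Subtype.ext (congrArg Prod.fst h)
  have hImap : Subgroup.map gφ ⊤ = I := by rw [hI, ← MonoidHom.range_eq_map]
  have hJmap : Subgroup.map gψ ⊤ = J := by rw [hJ, ← MonoidHom.range_eq_map]
  have hmemφ : ∀ (S : Subgroup ↥B) (x : F × G),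
      x ∈ S.map gφ ↔ ∃ b : ↥B, b ∈ S ∧ ((φ b : F) = x.1 ∧ (b : G) = x.2) := by
    intro S x
    rw [Subgroup.mem_map]
    constructor
    · rintro ⟨b, hb, rfl⟩; exact ⟨b, hb, rfl, rfl⟩
    · rintro ⟨b, hb, h1, h2⟩
      exact ⟨b, hb, Prod.ext h1 h2⟩
  have hmemψ : ∀ (S : Subgroup ↥B) (x : G × H),
      x ∈ S.map gψ ↔ ∃ b : ↥B, b ∈ S ∧ ((b : G) = x.1 ∧ (ψ b : H) = x.2) := by
    intro S x
    rw [Subgroup.mem_map]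
    constructor
    · rintro ⟨b, hb, rfl⟩; exact ⟨b, hb, rfl, rfl⟩
    · rintro ⟨b, hb, h1, h2⟩
      exact ⟨b, hb, Prod.ext h1 h2⟩
  have hmemc : ∀ (S : Subgroup ↥B) (x : F × H),
      x ∈ S.map gc ↔ ∃ b : ↥B, b ∈ S ∧ ((φ b : F) = x.1 ∧ (ψ b : H) = x.2) := by
    intro S x
    rw [Subgroup.mem_map]
    constructor
    · rintro ⟨b, hb, rfl⟩; exact ⟨b, hb, rfl, rfl⟩
    · rintro ⟨b, hb, h1, h2⟩
      exact ⟨b, hb, Prod.ext h1 h2⟩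
  have hstar : ∀ S₁ S₂ : Subgroup ↥B,
      starProd (S₁.map gφ) (S₂.map gψ) = (S₁ ⊓ S₂).map gc := by
    intro S₁ S₂
    ext x
    rw [mem_starProd, hmemc]
    constructor
    · rintro ⟨s, h1, h2⟩
      rw [hmemφ] at h1
      rw [hmemψ] at h2
      obtain ⟨b₁, hb₁, e1, e2⟩ := h1
      obtain ⟨b₂, hb₂, e3, e4⟩ := h2
      have hb : b₂ = b₁ := Subtype.ext (e3.trans e2.symm)
      subst hb
      exact ⟨b₂, ⟨hb₁, hb₂⟩, e1, e4⟩
    · rintro ⟨b, ⟨h1, h2⟩, e1, e2⟩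
      exact ⟨(b : G), (hmemφ S₁ _).2 ⟨b, h1, e1, rfl⟩, (hmemψ S₂ _).2 ⟨b, h2, rfl, e2⟩⟩
  have part1 : starProd I J = gc.range := by
    rw [← hImap, ← hJmap, hstar, top_inf_eq, ← MonoidHom.range_eq_map]
  have part2a : p2 I = p1 J := by
    ext x
    unfold p2 p1
    rw [Subgroup.mem_map, Subgroup.mem_map]
    constructor
    · rintro ⟨y, hy, rfl⟩
      rw [← hImap, Subgroup.mem_map] at hy
      obtain ⟨b, -, rfl⟩ := hy
      exact ⟨gψ b, by rw [← hJmap]; exact Subgroup.mem_map_of_mem _ trivial, rfl⟩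
    · rintro ⟨y, hy, rfl⟩
      rw [← hJmap, Subgroup.mem_map] at hy
      obtain ⟨b, -, rfl⟩ := hy
      exact ⟨gφ b, by rw [← hImap]; exact Subgroup.mem_map_of_mem _ trivial, rfl⟩
  have part2b : p1 K = p1 (starProd I J) := by
    rw [part1]
    ext x
    unfold p1
    rw [Subgroup.mem_map, Subgroup.mem_map]
    constructor
    · rintro ⟨y, hy, rfl⟩
      rw [hK, MonoidHom.mem_range] at hy
      obtain ⟨c, rfl⟩ := hy
      obtain ⟨b, hb⟩ := hφ (θ c)
      exact ⟨gc b, ⟨b, rfl⟩, congrArg (fun a : ↥A => (a : F)) hb⟩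
    · rintro ⟨y, hy, rfl⟩
      rw [MonoidHom.mem_range] at hy
      obtain ⟨b, rfl⟩ := hy
      refine ⟨((A.subtype.comp θ.toMonoidHom).prod C.subtype) (θ.symm (φ b)),
        by rw [hK]; exact ⟨θ.symm (φ b), rfl⟩, ?_⟩
      show ((θ (θ.symm (φ b)) : ↥A) : F) = _
      rw [θ.apply_symm_apply]
      rfl
  have part2c : p2 K = p2 (starProd I J) := by
    rw [part1]
    ext x
    unfold p2
    rw [Subgroup.mem_map, Subgroup.mem_map]
    constructor
    · rintro ⟨y, hy, rfl⟩
      rw [hK, MonoidHom.mem_range] at hy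
      obtain ⟨c, rfl⟩ := hy
      obtain ⟨b, hb⟩ := hψ c
      exact ⟨gc b, ⟨b, rfl⟩, congrArg (fun a : ↥C => (a : H)) hb⟩
    · rintro ⟨y, hy, rfl⟩
      rw [MonoidHom.mem_range] at hy
      obtain ⟨b, rfl⟩ := hy
      exact ⟨((A.subtype.comp θ.toMonoidHom).prod C.subtype) (ψ b),
        by rw [hK]; exact ⟨ψ b, rfl⟩, rfl⟩
  have part6 : φ.ker = ψ.ker → K = starProd I J := by
    intro hkker
    refine le_antisymm hKIJ ?_
    rw [part1]
    rintro x hx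
    rw [MonoidHom.mem_range] at hx
    obtain ⟨b, rfl⟩ := hx
    have hcK : (((θ (ψ b) : ↥A) : F), ((ψ b : ↥C) : H)) ∈ K := by
      rw [hK]; exact ⟨ψ b, rfl⟩
    have hs := hKIJ hcK
    rw [mem_starProd] at hs
    obtain ⟨s, h1, h2⟩ := hs
    rw [← hImap, Subgroup.mem_map] at h1
    rw [← hJmap, Subgroup.mem_map] at h2
    obtain ⟨b', -, hb'⟩ := h1
    obtain ⟨b'', -, hb''⟩ := h2
    have e1 : (b' : G) = s := congrArg Prod.snd hb'
    have e2 : (b'' : G) = s := congrArg Prod.fst hb''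
    have hbb : b' = b'' := Subtype.ext (e1.trans e2.symm)
    subst hbb
    have e3 : ψ b' = ψ b := Subtype.ext (congrArg Prod.snd hb'')
    have e4 : φ b' = θ (ψ b) := Subtype.ext (congrArg Prod.fst hb')
    have e5 : b' * b⁻¹ ∈ ψ.ker := by
      rw [MonoidHom.mem_ker, map_mul, map_inv, e3, mul_inv_cancel]
    rw [← hkker] at e5
    have e6 : φ b' = φ b := by
      rw [MonoidHom.mem_ker, map_mul, map_inv] at e5
      exact mul_inv_eq_one.1 e5
    rw [hK, MonoidHom.mem_range]
    exact ⟨ψ b, Prod.ext (congrArg (fun a : ↥A => (a : F)) (e4.symm.trans e6)) rfl⟩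
  have hmoebI : ∀ S : Subgroup ↥B, moeb (S.map gφ) I = moeb S ⊤ := by
    intro S
    exact (pmoeb_transport (⊤ : Subgroup ↥B) I
      (fun S => S.map gφ) (fun W => W.comap gφ) hImap
      (fun u v _ _ => (Subgroup.map_le_map_iff_of_injective hφinj).symm)
      (fun W hW => ⟨le_top, Subgroup.map_comap_eq_self (by rw [← hI]; exact hW)⟩)
      S le_top).symm
  have hmoebJ : ∀ S : Subgroup ↥B, moeb (S.map gψ) J = moeb S ⊤ := by
    intro S
    exact (pmoeb_transport (⊤ : Subgroup ↥B) J
      (fun S => S.map gψ) (fun W => W.comap gψ) hJmap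
      (fun u v _ _ => (Subgroup.map_le_map_iff_of_injective hψinj).symm)
      (fun W hW => ⟨le_top, Subgroup.map_comap_eq_self (by rw [← hJ]; exact hW)⟩)
      S le_top).symm
  have hk2m : ∀ S : Subgroup ↥B, k2 (S.map gφ) = (φ.ker ⊓ S).map B.subtype := by
    intro S
    ext x
    unfold k2
    rw [Subgroup.mem_comap, hmemφ, Subgroup.mem_map]
    constructor
    · rintro ⟨b, hb, e1, e2⟩
      refine ⟨b, Subgroup.mem_inf.mpr ⟨MonoidHom.mem_ker.mpr
        (OneMemClass.coe_eq_one.mp e1), hb⟩, e2⟩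
    · rintro ⟨b, hbm, e⟩
      obtain ⟨hk, hS⟩ := Subgroup.mem_inf.mp hbm
      refine ⟨b, hS, ?_, e⟩
      rw [MonoidHom.mem_ker] at hk
      rw [hk]
      rfl
  have hk1m : ∀ S : Subgroup ↥B, k1 (S.map gψ) = (ψ.ker ⊓ S).map B.subtype := by
    intro S
    ext x
    unfold k1
    rw [Subgroup.mem_comap, hmemψ, Subgroup.mem_map]
    constructor
    · rintro ⟨b, hb, e1, e2⟩
      refine ⟨b, Subgroup.mem_inf.mpr ⟨MonoidHom.mem_ker.mpr
        (OneMemClass.coe_eq_one.mp e2), hb⟩, e1⟩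
    · rintro ⟨b, hbm, e⟩
      obtain ⟨hk, hS⟩ := Subgroup.mem_inf.mp hbm
      refine ⟨b, hS, e, ?_⟩
      rw [MonoidHom.mem_ker] at hk
      rw [hk]
      rfl
  have hinfmap : ∀ X Y : Subgroup ↥B,
      (X.map B.subtype) ⊓ (Y.map B.subtype) = (X ⊓ Y).map B.subtype := by
    intro X Y
    ext x
    rw [Subgroup.mem_inf, Subgroup.mem_map, Subgroup.mem_map, Subgroup.mem_map]
    constructor
    · rintro ⟨⟨b, hb, rfl⟩, ⟨b', hb', e'⟩⟩
      have : b' = b := Subtype.ext e'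
      subst this
      exact ⟨b', ⟨hb, hb'⟩, rfl⟩
    · rintro ⟨b, ⟨h1, h2⟩, rfl⟩
      exact ⟨⟨b, h1, rfl⟩, ⟨b, h2, rfl⟩⟩
  have hσ : ∀ S₁ S₂ : Subgroup ↥B, sigmaC ℓ (S₁.map gφ) (S₂.map gψ) =
      ellG ℓ ↥(φ.ker ⊓ (S₁ ⊓ S₂) ⊓ ψ.ker) := by
    intro S₁ S₂
    unfold sigmaC
    have h1 : k2 (S₁.map gφ) ⊓ k1 (S₂.map gψ) =
        (φ.ker ⊓ (S₁ ⊓ S₂) ⊓ ψ.ker).map B.subtype := by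
      rw [hk2m, hk1m, hinfmap]
      congr 1
      ext b
      simp only [Subgroup.mem_inf]
      tauto
    apply ellG_congr
    rw [h1]
    exact (Nat.card_congr
      (Subgroup.equivMapOfInjective _ B.subtype (Subgroup.subtype_injective B)).toEquiv).symm
  have hrangec : ∀ S : Subgroup ↥B, (gc.comp S.subtype).range = S.map gc := by
    intro S; rw [MonoidHom.range_comp, Subgroup.range_subtype]
  have part5 : tau ℓ I J K = ∑ᶠ S ∈ {S : Subgroup ↥B | K ≤ (gc.comp S.subtype).range},
      (moeb S ⊤ : 𝕂) * ellG ℓ ↥(φ.ker ⊓ S ⊓ ψ.ker) := by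
    unfold tau
    rw [← Set.coe_toFinset {q : Subgroup (F × G) × Subgroup (G × H) |
      q.1 ≤ I ∧ q.2 ≤ J ∧ K ≤ starProd q.1 q.2}, finsum_mem_coe_finset]
    rw [← Set.coe_toFinset {S : Subgroup ↥B | K ≤ (gc.comp S.subtype).range},
      finsum_mem_coe_finset]
    have hre : ∑ q ∈ (Set.toFinset {q : Subgroup (F × G) × Subgroup (G × H) |
          q.1 ≤ I ∧ q.2 ≤ J ∧ K ≤ starProd q.1 q.2}),
        (moeb q.1 I : 𝕂) * (moeb q.2 J : 𝕂) * sigmaC ℓ q.1 q.2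
        = ∑ p ∈ (Finset.univ : Finset (Subgroup ↥B × Subgroup ↥B)).filter
            (fun p => K ≤ (p.1 ⊓ p.2).map gc),
          (moeb p.1 ⊤ : 𝕂) * (moeb p.2 ⊤ : 𝕂) * ellG ℓ ↥(φ.ker ⊓ (p.1 ⊓ p.2) ⊓ ψ.ker) := by
      apply Finset.sum_nbij' (fun q => (Subgroup.comap gφ q.1, Subgroup.comap gψ q.2))
        (fun p => (Subgroup.map gφ p.1, Subgroup.map gψ p.2))
      · intro q hq
        rw [Set.mem_toFinset] at hq
        obtain ⟨h1, h2, h3⟩ := hq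
        have e1 : Subgroup.map gφ (Subgroup.comap gφ q.1) = q.1 :=
          Subgroup.map_comap_eq_self (by rw [← hI]; exact h1)
        have e2 : Subgroup.map gψ (Subgroup.comap gψ q.2) = q.2 :=
          Subgroup.map_comap_eq_self (by rw [← hJ]; exact h2)
        rw [Finset.mem_filter]
        refine ⟨Finset.mem_univ _, ?_⟩
        rw [← hstar, e1, e2]
        exact h3
      · intro p hp
        rw [Finset.mem_filter] at hp
        rw [Set.mem_toFinset]
        refine ⟨?_, ?_, ?_⟩
        · rw [← hImap]; exact Subgroup.map_mono le_top
        · rw [← hJmap]; exact Subgroup.map_mono le_top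
        · rw [hstar]; exact hp.2
      · intro q hq
        rw [Set.mem_toFinset] at hq
        exact Prod.ext (Subgroup.map_comap_eq_self (by rw [← hI]; exact hq.1))
          (Subgroup.map_comap_eq_self (by rw [← hJ]; exact hq.2.1))
      · intro p _
        exact Prod.ext (Subgroup.comap_map_eq_self_of_injective hφinj _)
          (Subgroup.comap_map_eq_self_of_injective hψinj _)
      · intro q hq
        rw [Set.mem_toFinset] at hq
        obtain ⟨h1, h2, h3⟩ := hq
        have e1 : q.1 = Subgroup.map gφ (Subgroup.comap gφ q.1) :=
          (Subgroup.map_comap_eq_self (by rw [← hI]; exact h1)).symm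
        have e2 : q.2 = Subgroup.map gψ (Subgroup.comap gψ q.2) :=
          (Subgroup.map_comap_eq_self (by rw [← hJ]; exact h2)).symm
        conv_lhs => rw [e1, e2]
        rw [hmoebI, hmoebJ, hσ]
    rw [hre, Finset.sum_filter]
    have hswap : ∀ p : Subgroup ↥B × Subgroup ↥B,
        (if K ≤ (p.1 ⊓ p.2).map gc then
          (moeb p.1 ⊤ : 𝕂) * (moeb p.2 ⊤ : 𝕂) * ellG ℓ ↥(φ.ker ⊓ (p.1 ⊓ p.2) ⊓ ψ.ker) else 0)
        = (moeb p.1 ⊤ : 𝕂) * (moeb p.2 ⊤ : 𝕂) *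
            (if K ≤ (p.1 ⊓ p.2).map gc then ellG ℓ ↥(φ.ker ⊓ (p.1 ⊓ p.2) ⊓ ψ.ker) else 0) := by
      intro p; split_ifs <;> simp
    rw [Finset.sum_congr rfl fun p _ => hswap p]
    rw [← Finset.univ_product_univ]
    rw [Finset.sum_product' (f := fun S₁ S₂ : Subgroup ↥B =>
      (moeb S₁ (⊤ : Subgroup ↥B) : 𝕂) * (moeb S₂ ⊤ : 𝕂) *
      (if K ≤ (S₁ ⊓ S₂).map gc then ellG ℓ ↥(φ.ker ⊓ (S₁ ⊓ S₂) ⊓ ψ.ker) else 0))]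
    unfold moeb
    rw [pmoeb_conv (L := Subgroup ↥B) (M := 𝕂)
      (fun D => if K ≤ D.map gc then ellG ℓ ↥(φ.ker ⊓ D ⊓ ψ.ker) else 0)]
    rw [show (Set.toFinset {S : Subgroup ↥B | K ≤ (gc.comp S.subtype).range})
        = Finset.univ.filter (fun S : Subgroup ↥B => K ≤ S.map gc) from by
      ext S; simp [Set.mem_toFinset, hrangec]]
    rw [Finset.sum_filter]
    apply Finset.sum_congr rfl
    intro D _
    split_ifs <;> simp
  exact ⟨part1, part2a, part2b, part2c, part5, part6⟩

end SubgroupCat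
end

section
/- Let F, G, H be finite groups and let B ≤ G be a subgroup. Set I = {1} × B ≤ F × G and J = B × {1} ≤ G × H. Then for every subgroup K ≤ F × H one has τ_K^{I,J} = φ(B) if K is the trivial subgroup of F × H, and τ_K^{I,J} = 0 otherwise, where φ(B) = Σ_{S ≤ B} möb(S, B) · ℓ(S), the sum over all subgroups S of B. -/
open scoped Classical

namespace SubgroupCat

variable {R S T : Type*}

section Moebius

variable {P : Type*} [PartialOrder P] [Finite P]

lemma pmoeb_self (i : P) : pmoeb i i = 1 := by rw [pmoeb]; simp

lemma pmoeb_of_not_le {u i : P} (h : ¬ u ≤ i) : pmoeb u i = 0 := by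
  rw [pmoeb, if_neg, if_neg]
  · exact fun hlt => h hlt.le
  · rintro rfl; exact h le_rfl

lemma pmoeb_rec {u i : P} (h : u < i) :
    pmoeb u i = - ∑ v ∈ ({v : P | u < v ∧ v ≤ i}.toFinite.toFinset), pmoeb v i := by
  rw [pmoeb, if_neg h.ne, if_pos h]
  exact congrArg Neg.neg (Finset.sum_attach ({v : P | u < v ∧ v ≤ i}.toFinite.toFinset) (fun v => pmoeb v i))

lemma card_lt_of_lt {u v : P} (h : u < v) :
    Nat.card {w : P // v ≤ w} < Nat.card {w : P // u ≤ w} := by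
  have hsub : {w : P | v ≤ w} ⊂ {w : P | u ≤ w} :=
    ⟨fun w hw => le_trans h.le hw,
     fun hcon => absurd (hcon (le_refl u)) (by simpa using h.not_ge)⟩
  rw [show {w : P // v ≤ w} = ↑{w : P | v ≤ w} from rfl,
    show {w : P // u ≤ w} = ↑{w : P | u ≤ w} from rfl,
    Nat.card_coe_set_eq, Nat.card_coe_set_eq]
  exact Set.ncard_lt_ncard hsub (Set.toFinite _)

lemma card_pos' (u : P) : 0 < Nat.card {w : P // u ≤ w} :=
  Nat.card_pos (α := {w : P // u ≤ w})

lemma sum_pmoeb_left [Fintype P] (u i : P) :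
    ∑ w : P, (if u ≤ w ∧ w ≤ i then pmoeb w i else 0) = if u = i then 1 else 0 := by
  classical
  rcases eq_or_ne u i with rfl | hne
  · rw [if_pos rfl, Finset.sum_eq_single u]
    · rw [if_pos ⟨le_rfl, le_rfl⟩, pmoeb_self]
    · intro w _ hw
      rw [if_neg]
      rintro ⟨h1, h2⟩
      exact hw (le_antisymm h2 h1)
    · intro h; exact absurd (Finset.mem_univ u) h
  · rw [if_neg hne]
    by_cases hle : u ≤ i
    · have hlt : u < i := hle.lt_of_ne hne
      rw [← Finset.sum_filter]
      have hins : (Finset.univ.filter (fun w => u ≤ w ∧ w ≤ i)) =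
          insert u (Finset.univ.filter (fun w => u < w ∧ w ≤ i)) := by
        ext w
        simp only [Finset.mem_filter, Finset.mem_univ, true_and, Finset.mem_insert]
        constructor
        · rintro ⟨h1, h2⟩
          rcases h1.lt_or_eq with h | h
          · exact Or.inr ⟨h, h2⟩
          · exact Or.inl h.symm
        · rintro (rfl | ⟨h1, h2⟩)
          · exact ⟨le_rfl, hle⟩
          · exact ⟨h1.le, h2⟩
      rw [hins, Finset.sum_insert (by simp)]
      have hfs : ({v : P | u < v ∧ v ≤ i}.toFinite.toFinset) =
          Finset.univ.filter (fun w => u < w ∧ w ≤ i) := by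
        ext w; simp
      rw [pmoeb_rec hlt, hfs, neg_add_cancel]
    · apply Finset.sum_eq_zero
      intro w _
      rw [if_neg]
      rintro ⟨h1, h2⟩
      exact hle (h1.trans h2)

lemma sum_pmoeb_right [Fintype P] (u i : P) :
    ∑ w : P, (if u ≤ w ∧ w ≤ i then pmoeb u w else 0) = if u = i then 1 else 0 := by
  classical
  set Z : Matrix P P ℤ := Matrix.of (fun a b => if a ≤ b then (1 : ℤ) else 0) with hZ
  set M : Matrix P P ℤ := Matrix.of (fun a b => pmoeb a b) with hM
  have hZM : Z * M = 1 := by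
    ext a b
    rw [Matrix.mul_apply, Matrix.one_apply, ← sum_pmoeb_left a b]
    apply Finset.sum_congr rfl
    intro w _
    by_cases h1 : a ≤ w
    · by_cases h2 : w ≤ b
      · simp [hZ, hM, h1, h2]
      · simp [hZ, hM, h1, h2, pmoeb_of_not_le h2]
    · simp [hZ, hM, h1]
  have hMZ : M * Z = 1 := mul_eq_one_comm.mp hZM
  have key := congrFun (congrFun (congrArg (fun m => m) hMZ) u) i
  have key2 : ∑ w : P, M u w * Z w i = (1 : Matrix P P ℤ) u i := by
    rw [← Matrix.mul_apply]; rw [hMZ]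
  rw [Matrix.one_apply] at key2
  rw [← key2]
  apply Finset.sum_congr rfl
  intro w _
  by_cases h2 : w ≤ i
  · by_cases h1 : u ≤ w
    · simp [hZ, hM, h1, h2]
    · simp [hZ, hM, h1, h2, pmoeb_of_not_le h1]
  · simp [hZ, hM, h2]

end Moebius

section Transfer

lemma pmoeb_subtype_aux {P : Type*} [PartialOrder P] [Finite P] (A : Set P) :
    ∀ n : ℕ, ∀ (u i : P) (hu : u ∈ A) (hi : i ∈ A), Set.Icc u i ⊆ A →
      Nat.card {w : P // u ≤ w} ≤ n →
      pmoeb u i = pmoeb (⟨u, hu⟩ : A) ⟨i, hi⟩ := by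
  intro n
  induction n with
  | zero =>
    intro u i hu hi _ hn
    exact absurd hn (by simpa using (card_pos' u).ne')
  | succ n ih =>
    intro u i hu hi hIcc hn
    rcases eq_or_ne u i with rfl | hne
    · have : (⟨u, hu⟩ : A) = ⟨u, hi⟩ := rfl
      rw [pmoeb_self, this, pmoeb_self]
    · by_cases hle : u ≤ i
      · have hlt : u < i := hle.lt_of_ne hne
        have hlt' : (⟨u, hu⟩ : A) < ⟨i, hi⟩ := Subtype.mk_lt_mk.mpr hlt
        rw [pmoeb_rec hlt, pmoeb_rec hlt']
        congr 1
        refine Finset.sum_bij'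
          (fun v hv => (⟨v, hIcc ⟨(by
            have := (Set.Finite.mem_toFinset _).mp hv
            exact this.1.le), (by
            have := (Set.Finite.mem_toFinset _).mp hv
            exact this.2)⟩⟩ : A))
          (fun w _ => (w : P)) ?_ ?_ ?_ ?_ ?_
        · intro v hv
          have hv' := (Set.Finite.mem_toFinset _).mp hv
          rw [Set.Finite.mem_toFinset]
          exact ⟨Subtype.mk_lt_mk.mpr hv'.1, Subtype.mk_le_mk.mpr hv'.2⟩
        · intro w hw
          have hw' := (Set.Finite.mem_toFinset _).mp hw
          rw [Set.Finite.mem_toFinset]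
          exact ⟨Subtype.mk_lt_mk.mp hw'.1, Subtype.mk_le_mk.mp hw'.2⟩
        · intro v hv; rfl
        · intro w hw; rfl
        · intro v hv
          have hv' := (Set.Finite.mem_toFinset _).mp hv
          refine ih v i (hIcc ⟨hv'.1.le, hv'.2⟩) hi
            (fun x hx => hIcc ⟨hv'.1.le.trans hx.1, hx.2⟩) ?_
          have := card_lt_of_lt hv'.1
          omega
      · have hle' : ¬ (⟨u, hu⟩ : A) ≤ ⟨i, hi⟩ := fun h => hle (Subtype.mk_le_mk.mp h)
        rw [pmoeb_of_not_le hle, pmoeb_of_not_le hle']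

lemma pmoeb_orderIso {P Q : Type*} [PartialOrder P] [Finite P] [PartialOrder Q] [Finite Q]
    (e : P ≃o Q) :
    ∀ n : ℕ, ∀ (u i : P), Nat.card {w : P // u ≤ w} ≤ n →
      pmoeb u i = pmoeb (e u) (e i) := by
  intro n
  induction n with
  | zero =>
    intro u i hn
    exact absurd hn (by simpa using (card_pos' u).ne')
  | succ n ih =>
    intro u i hn
    rcases eq_or_ne u i with rfl | hne
    · rw [pmoeb_self, pmoeb_self]
    · by_cases hle : u ≤ i
      · have hlt : u < i := hle.lt_of_ne hne
        have hlt' : e u < e i := e.strictMono hlt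
        rw [pmoeb_rec hlt, pmoeb_rec hlt']
        congr 1
        refine Finset.sum_nbij' (fun v => e v) (fun w => e.symm w) ?_ ?_ ?_ ?_ ?_
        · intro v hv
          have hv' := (Set.Finite.mem_toFinset _).mp hv
          rw [Set.Finite.mem_toFinset]
          exact ⟨e.strictMono hv'.1, e.le_iff_le.mpr hv'.2⟩
        · intro w hw
          have hw' := (Set.Finite.mem_toFinset _).mp hw
          rw [Set.Finite.mem_toFinset]
          constructor
          · have := e.symm.strictMono hw'.1
            simpa using this
          · have := e.symm.monotone hw'.2
            simpa using this
        · intro v _; simp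
        · intro w _; simp
        · intro v hv
          have hv' := (Set.Finite.mem_toFinset _).mp hv
          refine ih v i ?_
          have := card_lt_of_lt hv'.1
          omega
      · have hle' : ¬ e u ≤ e i := fun h => hle (e.le_iff_le.mp h)
        rw [pmoeb_of_not_le hle, pmoeb_of_not_le hle']

end Transfer

section Key

lemma sum_cast_pmoeb_left {P : Type*} [PartialOrder P] [Fintype P]
    {R : Type*} [CommRing R] (u i : P) :
    ∑ w : P, (if u ≤ w ∧ w ≤ i then ((pmoeb w i : ℤ) : R) else 0)
      = if u = i then 1 else 0 := by
  classical
  calc ∑ w : P, (if u ≤ w ∧ w ≤ i then ((pmoeb w i : ℤ) : R) else 0)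
      = ∑ w : P, (((if u ≤ w ∧ w ≤ i then pmoeb w i else 0 : ℤ)) : R) := by
        apply Finset.sum_congr rfl; intro w _; split_ifs <;> simp
    _ = (((∑ w : P, if u ≤ w ∧ w ≤ i then pmoeb w i else 0 : ℤ)) : R) :=
        (map_sum (Int.castRingHom R) _ _).symm
    _ = (((if u = i then 1 else 0 : ℤ)) : R) := by rw [sum_pmoeb_left]
    _ = if u = i then 1 else 0 := by split_ifs <;> simp

lemma sum_cast_pmoeb_right {P : Type*} [PartialOrder P] [Fintype P]
    {R : Type*} [CommRing R] (u i : P) :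
    ∑ w : P, (if u ≤ w ∧ w ≤ i then ((pmoeb u w : ℤ) : R) else 0)
      = if u = i then 1 else 0 := by
  classical
  calc ∑ w : P, (if u ≤ w ∧ w ≤ i then ((pmoeb u w : ℤ) : R) else 0)
      = ∑ w : P, (((if u ≤ w ∧ w ≤ i then pmoeb u w else 0 : ℤ)) : R) := by
        apply Finset.sum_congr rfl; intro w _; split_ifs <;> simp
    _ = (((∑ w : P, if u ≤ w ∧ w ≤ i then pmoeb u w else 0 : ℤ)) : R) :=
        (map_sum (Int.castRingHom R) _ _).symm
    _ = (((if u = i then 1 else 0 : ℤ)) : R) := by rw [sum_pmoeb_right]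
    _ = if u = i then 1 else 0 := by split_ifs <;> simp

lemma key_sum {P : Type*} [SemilatticeInf P] [OrderTop P] [Fintype P]
    {R : Type*} [CommRing R] (g : P → R) :
    ∑ S : P, ∑ T : P, ((pmoeb S ⊤ : ℤ) : R) * ((pmoeb T ⊤ : ℤ) : R) * g (S ⊓ T)
      = ∑ S : P, ((pmoeb S ⊤ : ℤ) : R) * g S := by
  classical
  set a : P → R := fun S => ((pmoeb S ⊤ : ℤ) : R) with ha
  have htop : ∀ W : P, ∑ S : P, (if W ≤ S then a S else 0) = if W = ⊤ then 1 else 0 := by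
    intro W
    rw [← sum_cast_pmoeb_left W ⊤]
    apply Finset.sum_congr rfl
    intro S _
    simp [le_top, and_true, ha]
  set f : P → R := fun W => ∑ X : P, (if X ≤ W then ((pmoeb X W : ℤ) : R) * g X else 0)
    with hfdef
  have hinv : ∀ A : P, ∑ W : P, (if W ≤ A then f W else 0) = g A := by
    intro A
    calc ∑ W : P, (if W ≤ A then f W else 0)
        = ∑ W : P, ∑ X : P, (if X ≤ W ∧ W ≤ A then ((pmoeb X W : ℤ) : R) * g X else 0) := by
          apply Finset.sum_congr rfl
          intro W _
          split_ifs with h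
          · apply Finset.sum_congr rfl
            intro X _
            by_cases h2 : X ≤ W <;> simp [h, h2]
          · symm
            apply Finset.sum_eq_zero
            intro X _
            simp [h]
      _ = ∑ X : P, ∑ W : P, (if X ≤ W ∧ W ≤ A then ((pmoeb X W : ℤ) : R) else 0) * g X := by
          rw [Finset.sum_comm]
          apply Finset.sum_congr rfl; intro X _
          apply Finset.sum_congr rfl; intro W _
          split_ifs <;> simp
      _ = ∑ X : P, (if X = A then (1 : R) else 0) * g X := by
          apply Finset.sum_congr rfl
          intro X _
          rw [← Finset.sum_mul, sum_cast_pmoeb_right]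
      _ = g A := by simp
  calc ∑ S : P, ∑ T : P, a S * a T * g (S ⊓ T)
      = ∑ S : P, ∑ T : P, ∑ W : P,
          (if W ≤ S then a S else 0) * (if W ≤ T then a T else 0) * f W := by
        apply Finset.sum_congr rfl; intro S _
        apply Finset.sum_congr rfl; intro T _
        rw [← hinv (S ⊓ T), Finset.mul_sum]
        apply Finset.sum_congr rfl; intro W _
        by_cases h1 : W ≤ S <;> by_cases h2 : W ≤ T <;>
          simp [h1, h2, le_inf_iff, mul_assoc]
    _ = ∑ W : P, ∑ S : P, ∑ T : P,
          (if W ≤ S then a S else 0) * (if W ≤ T then a T else 0) * f W := by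
        trans ∑ S : P, ∑ W : P, ∑ T : P,
            (if W ≤ S then a S else 0) * (if W ≤ T then a T else 0) * f W
        · exact Finset.sum_congr rfl fun S _ => Finset.sum_comm
        · exact Finset.sum_comm
    _ = ∑ W : P, (∑ S : P, if W ≤ S then a S else 0) * (∑ T : P, if W ≤ T then a T else 0)
          * f W := by
        apply Finset.sum_congr rfl; intro W _
        rw [Finset.sum_mul_sum, Finset.sum_mul]
        apply Finset.sum_congr rfl; intro S _
        rw [Finset.sum_mul]
    _ = ∑ W : P, (if W = ⊤ then (1 : R) else 0) * (if W = ⊤ then (1 : R) else 0) * f W := by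
        apply Finset.sum_congr rfl; intro W _
        rw [htop W]
    _ = f ⊤ := by
        rw [Finset.sum_eq_single_of_mem ⊤ (Finset.mem_univ _)]
        · simp
        · intro W _ hW
          simp [hW]
    _ = ∑ S : P, a S * g S := by
        simp [hfdef, le_top, ha]

end Key

section Groups

variable {F G H : Type*} [Group F] [Group G] [Group H]

lemma k2_bot_prod (A : Subgroup G) : k2 ((⊥ : Subgroup F).prod A) = A := by
  ext s
  simp [k2, Subgroup.mem_comap, Subgroup.mem_prod]

lemma k1_prod_bot (A : Subgroup G) : k1 (A.prod (⊥ : Subgroup H)) = A := by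
  ext s
  simp [k1, Subgroup.mem_comap, Subgroup.mem_prod]

lemma bot_prod_le_iff {A A' : Subgroup G} :
    (⊥ : Subgroup F).prod A ≤ (⊥ : Subgroup F).prod A' ↔ A ≤ A' := by
  constructor
  · intro h a ha
    have : ((1 : F), a) ∈ (⊥ : Subgroup F).prod A := Subgroup.mem_prod.mpr ⟨one_mem _, ha⟩
    exact (Subgroup.mem_prod.mp (h this)).2
  · intro h
    exact Subgroup.prod_mono le_rfl h

lemma prod_bot_le_iff {A A' : Subgroup G} :
    A.prod (⊥ : Subgroup H) ≤ A'.prod (⊥ : Subgroup H) ↔ A ≤ A' := by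
  constructor
  · intro h a ha
    have : (a, (1 : H)) ∈ A.prod (⊥ : Subgroup H) := Subgroup.mem_prod.mpr ⟨ha, one_mem _⟩
    exact (Subgroup.mem_prod.mp (h this)).1
  · intro h
    exact Subgroup.prod_mono h le_rfl

lemma eq_bot_prod_of_le {B : Subgroup G} {U : Subgroup (F × G)}
    (h : U ≤ (⊥ : Subgroup F).prod B) : U = (⊥ : Subgroup F).prod (k2 U) := by
  ext ⟨f, g⟩
  simp only [Subgroup.mem_prod, Subgroup.mem_bot, k2, Subgroup.mem_comap, MonoidHom.inr_apply]
  constructor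
  · intro hU
    have h1 : f = 1 := by simpa using (Subgroup.mem_prod.mp (h hU)).1
    subst h1
    exact ⟨rfl, hU⟩
  · rintro ⟨rfl, hg⟩
    exact hg

lemma eq_prod_bot_of_le {B : Subgroup G} {V : Subgroup (G × H)}
    (h : V ≤ B.prod (⊥ : Subgroup H)) : V = (k1 V).prod (⊥ : Subgroup H) := by
  ext ⟨g, x⟩
  simp only [Subgroup.mem_prod, Subgroup.mem_bot, k1, Subgroup.mem_comap, MonoidHom.inl_apply]
  constructor
  · intro hV
    have h1 : x = 1 := by simpa using (Subgroup.mem_prod.mp (h hV)).2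
    subst h1
    exact ⟨hV, rfl⟩
  · rintro ⟨hg, rfl⟩
    exact hg

lemma k2_le_of_le {B : Subgroup G} {U : Subgroup (F × G)}
    (h : U ≤ (⊥ : Subgroup F).prod B) : k2 U ≤ B := fun s hs =>
  (Subgroup.mem_prod.mp (h hs)).2

lemma k1_le_of_le {B : Subgroup G} {V : Subgroup (G × H)}
    (h : V ≤ B.prod (⊥ : Subgroup H)) : k1 V ≤ B := fun s hs =>
  (Subgroup.mem_prod.mp (h hs)).1

lemma subgroupOf_k2 (B : Subgroup G) (S : Subgroup ↥B) :
    (k2 ((⊥ : Subgroup F).prod (S.map B.subtype))).subgroupOf B = S := by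
  rw [k2_bot_prod, ← Subgroup.comap_subtype]
  exact Subgroup.comap_map_eq_self_of_injective B.subtype_injective S

lemma subgroupOf_k1 (B : Subgroup G) (T : Subgroup ↥B) :
    (k1 ((T.map B.subtype).prod (⊥ : Subgroup H))).subgroupOf B = T := by
  rw [k1_prod_bot, ← Subgroup.comap_subtype]
  exact Subgroup.comap_map_eq_self_of_injective B.subtype_injective T

lemma reconstructI {B : Subgroup G} {U : Subgroup (F × G)}
    (h : U ≤ (⊥ : Subgroup F).prod B) :
    (⊥ : Subgroup F).prod (((k2 U).subgroupOf B).map B.subtype) = U := by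
  rw [Subgroup.subgroupOf_map_subtype, inf_eq_left.mpr (k2_le_of_le h)]
  exact (eq_bot_prod_of_le h).symm

lemma reconstructJ {B : Subgroup G} {V : Subgroup (G × H)}
    (h : V ≤ B.prod (⊥ : Subgroup H)) :
    (((k1 V).subgroupOf B).map B.subtype).prod (⊥ : Subgroup H) = V := by
  rw [Subgroup.subgroupOf_map_subtype, inf_eq_left.mpr (k1_le_of_le h)]
  exact (eq_prod_bot_of_le h).symm

/-- The lattice of subgroups of `B` is order-isomorphic to the subgroups of
`F × G` below `⊥ × B`. -/
noncomputable def PhiI (B : Subgroup G) :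
    Subgroup ↥B ≃o ↥{U : Subgroup (F × G) | U ≤ (⊥ : Subgroup F).prod B} where
  toFun S := ⟨(⊥ : Subgroup F).prod (S.map B.subtype),
    Subgroup.prod_mono le_rfl (Subgroup.map_subtype_le S)⟩
  invFun U := (k2 U.1).subgroupOf B
  left_inv S := subgroupOf_k2 B S
  right_inv U := Subtype.ext (reconstructI U.2)
  map_rel_iff' {S T} := by
    simp only [Equiv.coe_fn_mk, Subtype.mk_le_mk]
    rw [bot_prod_le_iff, Subgroup.map_subtype_le_map_subtype]

noncomputable def PhiJ (B : Subgroup G) :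
    Subgroup ↥B ≃o ↥{V : Subgroup (G × H) | V ≤ B.prod (⊥ : Subgroup H)} where
  toFun T := ⟨(T.map B.subtype).prod (⊥ : Subgroup H),
    Subgroup.prod_mono (Subgroup.map_subtype_le T) le_rfl⟩
  invFun V := (k1 V.1).subgroupOf B
  left_inv T := subgroupOf_k1 B T
  right_inv V := Subtype.ext (reconstructJ V.2)
  map_rel_iff' {S T} := by
    simp only [Equiv.coe_fn_mk, Subtype.mk_le_mk]
    rw [prod_bot_le_iff, Subgroup.map_subtype_le_map_subtype]

lemma map_subtype_top (B : Subgroup G) : (⊤ : Subgroup ↥B).map B.subtype = B := by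
  rw [← MonoidHom.range_eq_map, Subgroup.subtype_range]

lemma moeb_I [Finite F] [Finite G] (B : Subgroup G) (S : Subgroup ↥B) :
    moeb ((⊥ : Subgroup F).prod (S.map B.subtype)) ((⊥ : Subgroup F).prod B) = moeb S ⊤ := by
  set I : Subgroup (F × G) := (⊥ : Subgroup F).prod B with hI
  have hSle : (⊥ : Subgroup F).prod (S.map B.subtype) ∈ {U : Subgroup (F × G) | U ≤ I} :=
    Subgroup.prod_mono le_rfl (Subgroup.map_subtype_le S)
  have hIle : I ∈ {U : Subgroup (F × G) | U ≤ I} := Set.mem_setOf_eq ▸ le_rfl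
  have e1 := pmoeb_subtype_aux {U : Subgroup (F × G) | U ≤ I} (Nat.card _)
    ((⊥ : Subgroup F).prod (S.map B.subtype)) I hSle hIle (fun X hX => hX.2) le_rfl
  have e2 := pmoeb_orderIso (PhiI (F := F) B) (Nat.card _) S ⊤ le_rfl
  have e3 : PhiI (F := F) B S = ⟨(⊥ : Subgroup F).prod (S.map B.subtype), hSle⟩ := rfl
  have e4 : PhiI (F := F) B ⊤ = ⟨I, hIle⟩ := Subtype.ext (by
    show (⊥ : Subgroup F).prod ((⊤ : Subgroup ↥B).map B.subtype) = I
    rw [map_subtype_top])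
  rw [moeb, moeb, e1, e2, e3, e4]

lemma moeb_J [Finite G] [Finite H] (B : Subgroup G) (T : Subgroup ↥B) :
    moeb ((T.map B.subtype).prod (⊥ : Subgroup H)) (B.prod (⊥ : Subgroup H)) = moeb T ⊤ := by
  set J : Subgroup (G × H) := B.prod (⊥ : Subgroup H) with hJ
  have hTle : (T.map B.subtype).prod (⊥ : Subgroup H) ∈ {V : Subgroup (G × H) | V ≤ J} :=
    Subgroup.prod_mono (Subgroup.map_subtype_le T) le_rfl
  have hJle : J ∈ {V : Subgroup (G × H) | V ≤ J} := Set.mem_setOf_eq ▸ le_rfl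
  have e1 := pmoeb_subtype_aux {V : Subgroup (G × H) | V ≤ J} (Nat.card _)
    ((T.map B.subtype).prod (⊥ : Subgroup H)) J hTle hJle (fun X hX => hX.2) le_rfl
  have e2 := pmoeb_orderIso (PhiJ (H := H) B) (Nat.card _) T ⊤ le_rfl
  have e3 : PhiJ (H := H) B T = ⟨(T.map B.subtype).prod (⊥ : Subgroup H), hTle⟩ := rfl
  have e4 : PhiJ (H := H) B ⊤ = ⟨J, hJle⟩ := Subtype.ext (by
    show ((⊤ : Subgroup ↥B).map B.subtype).prod (⊥ : Subgroup H) = J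
    rw [map_subtype_top])
  rw [moeb, moeb, e1, e2, e3, e4]

lemma ellG_card_eq {𝕂 : Type*} [Field 𝕂] (ℓ : ℕ+ →* 𝕂ˣ) (A A' : Type*)
    [Group A] [Finite A] [Group A'] [Finite A'] (h : Nat.card A = Nat.card A') :
    ellG ℓ A = ellG ℓ A' := by
  rw [ellG, ellG]
  congr 2
  exact Subtype.ext h

lemma sigma_eval {𝕂 : Type*} [Field 𝕂] (ℓ : ℕ+ →* 𝕂ˣ) [Finite G] (B : Subgroup G)
    (S T : Subgroup ↥B) :
    sigmaC ℓ ((⊥ : Subgroup F).prod (S.map B.subtype))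
      ((T.map B.subtype).prod (⊥ : Subgroup H)) = ellG ℓ ↥(S ⊓ T) := by
  rw [sigmaC]
  apply ellG_card_eq
  have h1 : k2 ((⊥ : Subgroup F).prod (S.map B.subtype)) ⊓
      k1 ((T.map B.subtype).prod (⊥ : Subgroup H)) = (S ⊓ T).map B.subtype := by
    rw [k2_bot_prod, k1_prod_bot, Subgroup.map_inf _ _ _ B.subtype_injective]
  rw [h1]
  exact Nat.card_congr
    ((Subgroup.equivMapOfInjective (S ⊓ T) B.subtype B.subtype_injective).symm.toEquiv)

end Groups

/-- For `I = 1 × B ≤ F × G` and `J = B × 1 ≤ G × H` one has `τ_K^{I,J} = φ(B)` when `K`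
is trivial and `τ_K^{I,J} = 0` otherwise, where `φ(B) = ∑_{S ≤ B} möb(S, B) ℓ(S)`. -/
theorem tau_bot_prod {𝕂 : Type*} [Field 𝕂] [CharZero 𝕂] (ℓ : ℕ+ →* 𝕂ˣ)
    (F G H : Type*) [Group F] [Group G] [Group H] [Finite F] [Finite G] [Finite H]
    (B : Subgroup G) (K : Subgroup (F × H)) :
    tau ℓ (Subgroup.prod ⊥ B) (Subgroup.prod B ⊥) K =
      if K = ⊥ then ∑ᶠ S : Subgroup ↥B, (moeb S ⊤ : 𝕂) * ellG ℓ ↥S else 0 := by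
  classical
  by_cases hK : K = ⊥
  · rw [if_pos hK]
    subst hK
    rw [tau]
    have hset : {q : Subgroup (F × G) × Subgroup (G × H) |
        q.1 ≤ Subgroup.prod ⊥ B ∧ q.2 ≤ Subgroup.prod B ⊥ ∧
          (⊥ : Subgroup (F × H)) ≤ starProd q.1 q.2}
        = {q | q.1 ≤ Subgroup.prod ⊥ B ∧ q.2 ≤ Subgroup.prod B ⊥} := by
      ext q
      simp [bot_le]
    rw [hset]
    haveI : Fintype (Subgroup ↥B) := Fintype.ofFinite _
    rw [← Set.Finite.coe_toFinset (Set.toFinite {q : Subgroup (F × G) × Subgroup (G × H) |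
        q.1 ≤ Subgroup.prod ⊥ B ∧ q.2 ≤ Subgroup.prod B ⊥}),
      finsum_mem_coe_finset, finsum_eq_sum_of_fintype]
    have hre : ∑ q ∈ (Set.toFinite {q : Subgroup (F × G) × Subgroup (G × H) |
          q.1 ≤ Subgroup.prod ⊥ B ∧ q.2 ≤ Subgroup.prod B ⊥}).toFinset,
        (moeb q.1 (Subgroup.prod ⊥ B) : 𝕂) * (moeb q.2 (Subgroup.prod B ⊥) : 𝕂) *
          sigmaC ℓ q.1 q.2
        = ∑ p : Subgroup ↥B × Subgroup ↥B,
            (moeb p.1 ⊤ : 𝕂) * (moeb p.2 ⊤ : 𝕂) * ellG ℓ ↥(p.1 ⊓ p.2) := by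
      refine Finset.sum_nbij'
        (fun q => ((k2 q.1).subgroupOf B, (k1 q.2).subgroupOf B))
        (fun p => ((⊥ : Subgroup F).prod (p.1.map B.subtype),
          (p.2.map B.subtype).prod (⊥ : Subgroup H))) ?_ ?_ ?_ ?_ ?_
      · intro q _
        exact Finset.mem_univ _
      · intro p _
        rw [Set.Finite.mem_toFinset]
        exact ⟨Subgroup.prod_mono le_rfl (Subgroup.map_subtype_le _),
          Subgroup.prod_mono (Subgroup.map_subtype_le _) le_rfl⟩
      · intro q hq
        rw [Set.Finite.mem_toFinset] at hq
        exact Prod.ext (reconstructI hq.1) (reconstructJ hq.2)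
      · intro p _
        exact Prod.ext (subgroupOf_k2 B _) (subgroupOf_k1 B _)
      · intro q hq
        rw [Set.Finite.mem_toFinset] at hq
        conv_lhs =>
          rw [show q.1 = (⊥ : Subgroup F).prod (((k2 q.1).subgroupOf B).map B.subtype) from
              (reconstructI hq.1).symm,
            show q.2 = (((k1 q.2).subgroupOf B).map B.subtype).prod (⊥ : Subgroup H) from
              (reconstructJ hq.2).symm]
        rw [moeb_I, moeb_J, sigma_eval]
    rw [hre, Fintype.sum_prod_type]
    exact key_sum (P := Subgroup ↥B) (R := 𝕂) (fun W => ellG ℓ ↥W)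
  · rw [if_neg hK, tau]
    have hset : {q : Subgroup (F × G) × Subgroup (G × H) |
        q.1 ≤ Subgroup.prod ⊥ B ∧ q.2 ≤ Subgroup.prod B ⊥ ∧ K ≤ starProd q.1 q.2}
        = (∅ : Set _) := by
      ext q
      simp only [Set.mem_setOf_eq, Set.mem_empty_iff_false, iff_false, not_and]
      intro h1 h2 h3
      apply hK
      rw [← le_bot_iff]
      intro x hx
      obtain ⟨s, hU, hV⟩ := h3 hx
      have hx1 : x.1 ∈ (⊥ : Subgroup F) := (Subgroup.mem_prod.mp (h1 hU)).1
      have hx2 : x.2 ∈ (⊥ : Subgroup H) := (Subgroup.mem_prod.mp (h2 hV)).2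
      simp only [Subgroup.mem_bot] at hx1 hx2 ⊢
      exact Prod.ext hx1 hx2
    rw [hset, finsum_mem_empty]

end SubgroupCat
end
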